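/- arXiv:2404.19728 — 5 statements merged into one kernel-verified Lean document; each statement's English description precedes it below -/
import Mathlib

section
/- Let K be an algebraically closed field of characteristic ≠ 2, s ≥ 3, q ≥ 1, and u a unit in K[[y]]. If (x² + α y^s, u·x·y^q) is an isolated complete intersection in K[[x,y]] with α ∈ {0,1}, then α = 1 and the pair is contact equivalent to (x² + y^s, x y^q). -/
open MvPowerSeries

noncomputable section

variable (K : Type) [Field K]

abbrev R2 := MvPowerSeries (Fin 2) K

def mIdeal : Ideal (R2 K) := Ideal.span {X 0, X 1}

/-- Formal partial derivative of a power series in two variables. -/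
def pd (i : Fin 2) (f : R2 K) : R2 K :=
  fun α => ((α i + 1 : ℕ) : K) * coeff (R := K) (α + Finsupp.single i 1) f

def jacDet (f₁ f₂ : R2 K) : R2 K :=
  pd K 0 f₁ * pd K 1 f₂ - pd K 1 f₁ * pd K 0 f₂

def ContactEquiv (f g : R2 K × R2 K) : Prop :=
  ∃ φ : R2 K ≃ₐ[K] R2 K,
    Ideal.map φ.toAlgHom.toRingHom (Ideal.span {f.1, f.2}) = Ideal.span {g.1, g.2}

def IsICIS (f₁ f₂ : R2 K) : Prop :=
  f₁ ∈ mIdeal K ∧ f₂ ∈ mIdeal K ∧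
  (∀ g : R2 K, Ideal.span {f₁, f₂} ≠ Ideal.span {g}) ∧
  f₁ ≠ 0 ∧ (∀ a : R2 K, a * f₂ ∈ Ideal.span {f₁} → a ∈ Ideal.span {f₁}) ∧
  ∃ k : ℕ, (mIdeal K) ^ k ≤ Ideal.span {f₁, f₂} ⊔ Ideal.span {jacDet K f₁ f₂}

/-- Determinant of the Hessian matrix of a power series in two variables. -/
def hessDet (f : R2 K) : K :=
  (2 * coeff (R := K) (Finsupp.single 0 2) f) * (2 * coeff (R := K) (Finsupp.single 1 2) f) -
    (coeff (R := K) (Finsupp.single 0 1 + Finsupp.single 1 1) f) ^ 2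


/-- A power series involving only the variable `y`. -/
def OnlyY (u : R2 K) : Prop := ∀ β : Fin 2 →₀ ℕ, β 0 ≠ 0 → coeff (R := K) β u = 0

/-- If `(x² + α y^s, u x y^q)` (`u` a unit of `K[[y]]`, `α ∈ {0,1}`, `s ≥ 3`, `q ≥ 1`)
is an ICIS, then `α = 1` and the pair is contact equivalent to `(x² + y^s, x y^q)`. -/
theorem icis_case_xyq [IsAlgClosed K] (hchar : ringChar K ≠ 2)
    (s q : ℕ) (hs : 3 ≤ s) (hq : 1 ≤ q) (α : K) (hα : α = 0 ∨ α = 1)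
    (u : R2 K) (hu : OnlyY K u) (huu : IsUnit u)
    (hICIS : IsICIS K (X 0 ^ 2 + C (σ := Fin 2) (R := K) α * X 1 ^ s) (u * X 0 * X 1 ^ q)) :
    α = 1 ∧
      ContactEquiv K (X 0 ^ 2 + C (σ := Fin 2) (R := K) α * X 1 ^ s, u * X 0 * X 1 ^ q)
        (X 0 ^ 2 + X 1 ^ s, X 0 * X 1 ^ q) := by
  -- X 0 is not in the ideal generated by X 0 ^ 2
  have hXnot : (X 0 : R2 K) ∉ Ideal.span {(X 0 : R2 K) ^ 2} := by
    rw [Ideal.mem_span_singleton]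
    rintro ⟨c, hc⟩
    have h1 : coeff (R := K) (Finsupp.single 0 1) (X 0 : R2 K) = 1 := by
      rw [coeff_X]; simp
    have h2 : coeff (R := K) (Finsupp.single 0 1) ((X 0 : R2 K) ^ 2 * c) = 0 := by
      rw [X_pow_eq, coeff_monomial_mul, if_neg]
      intro h
      have := h 0
      simp [Finsupp.single_apply] at this
    rw [hc, h2] at h1
    exact one_ne_zero h1.symm
  have hα1 : α = 1 := by
    rcases hα with h0 | h1
    · exfalso
      obtain ⟨-, -, -, -, hreg, -⟩ := hICIS
      subst h0
      simp only [map_zero, zero_mul, add_zero] at hreg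
      have hmem : (X 0 : R2 K) * (u * X 0 * X 1 ^ q) ∈
          Ideal.span {(X 0 : R2 K) ^ 2} := by
        rw [Ideal.mem_span_singleton]
        exact ⟨u * X 1 ^ q, by ring⟩
      exact hXnot (hreg (X 0) hmem)
    · exact h1
  refine ⟨hα1, ?_⟩
  subst hα1
  refine ⟨AlgEquiv.refl, ?_⟩
  have hid : (AlgEquiv.refl : R2 K ≃ₐ[K] R2 K).toAlgHom.toRingHom = RingHom.id (R2 K) := rfl
  rw [hid, Ideal.map_id]
  obtain ⟨v, hv⟩ := huu.exists_left_inv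
  simp only [map_one, one_mul]
  apply le_antisymm
  · rw [Ideal.span_le]
    rintro f (rfl | rfl)
    · exact Ideal.subset_span (by left; rfl)
    · have : u * X 0 * X 1 ^ q = u * (X 0 * X 1 ^ q) := by ring
      rw [this]
      exact Ideal.mul_mem_left _ u (Ideal.subset_span (by right; rfl))
  · rw [Ideal.span_le]
    rintro f (rfl | rfl)
    · exact Ideal.subset_span (by left; rfl)
    · have : (X 0 : R2 K) * X 1 ^ q = v * (u * X 0 * X 1 ^ q) := by
        rw [show v * (u * X 0 * X 1 ^ q) = (v * u) * (X 0 * X 1 ^ q) by ring, hv, one_mul]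
      rw [this]
      exact Ideal.mul_mem_left _ v (Ideal.subset_span (by right; rfl))

end
end

section
/- Let K be an algebraically closed field with char(K) = p, and let t > q ≥ 1, s ≥ 3 with 2t - 2q - s ≠ 0 and p ∤ (2t - 2q - s). Let e ∈ K[[y]] be a unit. Then (x² + y^s, y^t + e·x·y^q) is contact equivalent to (x² + y^s, y^t + x·y^q) in K[[x,y]]. -/
open MvPowerSeries

noncomputable section

variable (K : Type) [Field K]

namespace CEaux

/-- the monomial exponent (m, n) -/
def mon (m n : ℕ) : Fin 2 →₀ ℕ := Finsupp.single 0 m + Finsupp.single 1 n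

@[simp] lemma mon_apply0 (m n : ℕ) : mon m n 0 = m := by
  simp [mon, Finsupp.single_apply]

@[simp] lemma mon_apply1 (m n : ℕ) : mon m n 1 = n := by
  simp [mon, Finsupp.single_apply]

lemma mon_eta (β : Fin 2 →₀ ℕ) : mon (β 0) (β 1) = β := by
  ext i
  fin_cases i <;> simp

lemma mon_add (m n m' n' : ℕ) : mon m n + mon m' n' = mon (m + m') (n + n') := by
  ext i; fin_cases i <;> simp

@[simp] lemma mon_zero : mon 0 0 = 0 := by
  ext i; fin_cases i <;> simp

lemma mon_eq_iff {m n m' n' : ℕ} : mon m n = mon m' n' ↔ m = m' ∧ n = n' := by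
  constructor
  · intro h
    constructor
    · have := congrArg (fun f : Fin 2 →₀ ℕ => f 0) h; simpa using this
    · have := congrArg (fun f : Fin 2 →₀ ℕ => f 1) h; simpa using this
  · rintro ⟨rfl, rfl⟩; rfl

lemma mon_le_iff {m n : ℕ} {β : Fin 2 →₀ ℕ} : mon m n ≤ β ↔ m ≤ β 0 ∧ n ≤ β 1 := by
  rw [Finsupp.le_def]
  constructor
  · intro h; exact ⟨by simpa using h 0, by simpa using h 1⟩
  · rintro ⟨h0, h1⟩ i; fin_cases i <;> simpa

lemma eq_zero_iff (β : Fin 2 →₀ ℕ) : β = 0 ↔ β 0 = 0 ∧ β 1 = 0 := by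
  constructor
  · rintro rfl; simp
  · rintro ⟨h0, h1⟩; ext i; fin_cases i <;> simpa

variable {K}

/-- coefficient in (m,n) coordinates -/
def cf (f : R2 K) (m n : ℕ) : K := coeff (mon m n) f

lemma coeff_eq_cf (f : R2 K) (β : Fin 2 →₀ ℕ) : coeff β f = cf f (β 0) (β 1) := by
  rw [cf, mon_eta]

/-- The embedding of one-variable power series as series in `y = X 1`. -/
def iota (w : PowerSeries K) : R2 K :=
  fun β => if β 0 = 0 then PowerSeries.coeff (β 1) w else 0

lemma coeff_iota (w : PowerSeries K) (β : Fin 2 →₀ ℕ) :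
    coeff β (iota w) = if β 0 = 0 then PowerSeries.coeff (β 1) w else 0 := rfl

lemma cf_iota (w : PowerSeries K) (m n : ℕ) :
    cf (iota w) m n = if m = 0 then PowerSeries.coeff n w else 0 := by
  rw [cf, coeff_iota]; simp

lemma onlyY_iota (w : PowerSeries K) : OnlyY K (iota w) := by
  intro β h
  rw [coeff_iota, if_neg h]

lemma iota_add (w w' : PowerSeries K) : iota (w + w') = iota w + iota w' := by
  ext β
  simp only [map_add, coeff_iota]
  split <;> simp

lemma iota_one : iota (1 : PowerSeries K) = 1 := by
  ext β
  rw [coeff_iota, coeff_one, PowerSeries.coeff_one]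
  by_cases h0 : β 0 = 0
  · rw [if_pos h0]
    by_cases h1 : β 1 = 0
    · rw [if_pos h1, if_pos ((eq_zero_iff β).2 ⟨h0, h1⟩)]
    · rw [if_neg h1, if_neg]
      intro hβ; apply h1; rw [hβ]; simp
  · rw [if_neg h0, if_neg]
    intro hβ; apply h0; rw [hβ]; simp

lemma iota_C (c : K) : iota (PowerSeries.C c) = C c := by
  ext β
  rw [coeff_iota, coeff_C, PowerSeries.coeff_C]
  by_cases h0 : β 0 = 0
  · rw [if_pos h0]
    by_cases h1 : β 1 = 0
    · rw [if_pos h1, if_pos ((eq_zero_iff β).2 ⟨h0, h1⟩)]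
    · rw [if_neg h1, if_neg]
      intro hβ; apply h1; rw [hβ]; simp
  · rw [if_neg h0, if_neg]
    intro hβ; apply h0; rw [hβ]; simp

lemma iota_mul (w w' : PowerSeries K) : iota (w * w') = iota w * iota w' := by
  classical
  ext β
  rw [coeff_mul, coeff_iota]
  by_cases h0 : β 0 = 0
  · rw [if_pos h0, PowerSeries.coeff_mul]
    refine (Finset.sum_nbij' (i := fun p => (p.1 1, p.2 1))
      (j := fun q => (mon 0 q.1, mon 0 q.2)) ?_ ?_ ?_ ?_ ?_).symm
    · intro p hp
      rw [Finset.HasAntidiagonal.mem_antidiagonal] at hp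
      rw [Finset.HasAntidiagonal.mem_antidiagonal]
      have := congrArg (fun f : Fin 2 →₀ ℕ => f 1) hp
      simpa using this
    · intro q hq
      rw [Finset.HasAntidiagonal.mem_antidiagonal] at hq
      rw [Finset.HasAntidiagonal.mem_antidiagonal, mon_add, zero_add, hq, ← h0, mon_eta]
    · intro p hp
      rw [Finset.HasAntidiagonal.mem_antidiagonal] at hp
      have e0 : p.1 0 = 0 ∧ p.2 0 = 0 := by
        have := congrArg (fun f : Fin 2 →₀ ℕ => f 0) hp
        simp only [Finsupp.add_apply] at this
        rw [h0] at this
        omega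
      have h1 : mon 0 (p.1 1) = p.1 := by rw [← e0.1, mon_eta]
      have h2 : mon 0 (p.2 1) = p.2 := by rw [← e0.2, mon_eta]
      simp [h1, h2]
    · intro q hq; simp
    · intro p hp
      rw [Finset.HasAntidiagonal.mem_antidiagonal] at hp
      have e0 : p.1 0 = 0 ∧ p.2 0 = 0 := by
        have := congrArg (fun f : Fin 2 →₀ ℕ => f 0) hp
        simp only [Finsupp.add_apply] at this
        rw [h0] at this
        omega
      simp [coeff_iota, e0.1, e0.2]
  · rw [if_neg h0]
    refine (Finset.sum_eq_zero ?_).symm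
    intro p hp
    rw [Finset.HasAntidiagonal.mem_antidiagonal] at hp
    have hsum : p.1 0 + p.2 0 = β 0 := by
      have := congrArg (fun f : Fin 2 →₀ ℕ => f 0) hp
      simpa using this
    rcases Nat.eq_zero_or_pos (p.1 0) with h | h
    · have h2 : p.2 0 ≠ 0 := by omega
      have : coeff p.2 (iota w') = 0 := by rw [coeff_iota, if_neg h2]
      rw [this, mul_zero]
    · have h1 : p.1 0 ≠ 0 := by omega
      have : coeff p.1 (iota w) = 0 := by rw [coeff_iota, if_neg h1]
      rw [this, zero_mul]

lemma iota_pow (w : PowerSeries K) (k : ℕ) : iota (w ^ k) = iota w ^ k := by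
  induction k with
  | zero => simpa using iota_one
  | succ k ih => rw [pow_succ, pow_succ, iota_mul, ih]

lemma iota_eq_self {e : R2 K} (he : OnlyY K e) :
    iota (PowerSeries.mk fun n => cf e 0 n) = e := by
  ext β
  rw [coeff_iota]
  by_cases h0 : β 0 = 0
  · rw [if_pos h0, PowerSeries.coeff_mk, cf, ← h0, mon_eta]
  · rw [if_neg h0, eq_comm]
    exact he β h0

section Phi
variable (u v : PowerSeries K)

lemma le_iff' {γ β : Fin 2 →₀ ℕ} : γ ≤ β ↔ γ 0 ≤ β 0 ∧ γ 1 ≤ β 1 := by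
  rw [Finsupp.le_def]
  constructor
  · intro h; exact ⟨h 0, h 1⟩
  · rintro ⟨h0, h1⟩ i; fin_cases i <;> simpa

/-- The substitution `x ↦ u(y)·x`, `y ↦ v(y)·y`. -/
def Phi (f : R2 K) : R2 K :=
  fun β => ∑ p ∈ Finset.HasAntidiagonal.antidiagonal (β 1),
    cf f (β 0) p.1 * PowerSeries.coeff p.2 (u ^ (β 0) * v ^ p.1)

lemma coeff_Phi (f : R2 K) (β : Fin 2 →₀ ℕ) :
    coeff β (Phi u v f) = ∑ p ∈ Finset.HasAntidiagonal.antidiagonal (β 1),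
      cf f (β 0) p.1 * PowerSeries.coeff p.2 (u ^ (β 0) * v ^ p.1) := rfl

lemma Phi_add (f g : R2 K) : Phi u v (f + g) = Phi u v f + Phi u v g := by
  ext β
  rw [map_add, coeff_Phi, coeff_Phi, coeff_Phi, ← Finset.sum_add_distrib]
  refine Finset.sum_congr rfl fun p _ => ?_
  simp only [cf, map_add, add_mul]

lemma Phi_zero : Phi u v (0 : R2 K) = 0 := by
  ext β
  rw [coeff_Phi]
  refine (Finset.sum_eq_zero fun p _ => ?_).trans (map_zero (coeff β)).symm
  rw [cf, map_zero, zero_mul]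

/-- `Phi` as an additive monoid hom. -/
def PhiAdd : R2 K →+ R2 K :=
  { toFun := Phi u v, map_zero' := Phi_zero u v, map_add' := Phi_add u v }

lemma mon_eq_iff' {m n : ℕ} {γ : Fin 2 →₀ ℕ} : mon m n = γ ↔ m = γ 0 ∧ n = γ 1 := by
  rw [← mon_eta γ, mon_eq_iff, mon_eta]

lemma Phi_monomial (γ : Fin 2 →₀ ℕ) (a : K) :
    Phi u v (monomial γ a) =
      C a * iota (u ^ (γ 0) * v ^ (γ 1)) * monomial γ 1 := by
  classical
  ext β
  rw [coeff_Phi]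
  trans (if β 0 = γ 0 ∧ γ 1 ≤ β 1 then
      a * PowerSeries.coeff (β 1 - γ 1) (u ^ (γ 0) * v ^ (γ 1)) else 0)
  · by_cases hc : β 0 = γ 0 ∧ γ 1 ≤ β 1
    · rw [Finset.sum_eq_single (γ 1, β 1 - γ 1), if_pos hc]
      · rw [cf, coeff_monomial, if_pos (mon_eq_iff'.2 ⟨hc.1, rfl⟩), hc.1]
      · intro p hp hne
        rw [Finset.HasAntidiagonal.mem_antidiagonal] at hp
        rw [cf, coeff_monomial]
        by_cases h : mon (β 0) p.1 = γ
        · exact absurd (Prod.ext_iff.2 ⟨(mon_eq_iff'.1 h).2, by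
            have := (mon_eq_iff'.1 h).2; omega⟩) hne
        · rw [if_neg h, zero_mul]
      · intro h
        exact absurd (Finset.HasAntidiagonal.mem_antidiagonal.2 (by omega)) h
    · rw [if_neg hc]
      refine Finset.sum_eq_zero fun p hp => ?_
      rw [Finset.HasAntidiagonal.mem_antidiagonal] at hp
      rw [cf, coeff_monomial]
      by_cases h : mon (β 0) p.1 = γ
      · rcases mon_eq_iff'.1 h with ⟨h0, h1⟩
        exact absurd ⟨h0, by omega⟩ hc
      · rw [if_neg h, zero_mul]
  · rw [mul_assoc, coeff_C_mul, coeff_mul_monomial]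
    by_cases hc : β 0 = γ 0 ∧ γ 1 ≤ β 1
    · have hle : γ ≤ β := le_iff'.2 ⟨hc.1.ge, hc.2⟩
      rw [if_pos hc, if_pos hle, coeff_iota, Finsupp.tsub_apply, Finsupp.tsub_apply,
        if_pos (by omega : β 0 - γ 0 = 0), mul_one]
    · rw [if_neg hc]
      by_cases hle : γ ≤ β
      · rcases le_iff'.1 hle with ⟨h0, h1⟩
        rw [if_pos hle, coeff_iota, Finsupp.tsub_apply,
          if_neg (by omega : ¬ β 0 - γ 0 = 0)]
        ring
      · rw [if_neg hle, mul_zero]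

lemma Phi_C (c : K) : Phi u v (C c) = C c := by
  rw [← monomial_zero_eq_C_apply, Phi_monomial]
  simp [monomial_zero_one, iota_one]

lemma Phi_one : Phi u v (1 : R2 K) = 1 := by
  have := Phi_C u v (1 : K)
  rwa [map_one] at this

lemma Phi_dep {f g : R2 K} {β : Fin 2 →₀ ℕ}
    (h : ∀ γ : Fin 2 →₀ ℕ, γ 0 ≤ β 0 → γ 1 ≤ β 1 → coeff γ f = coeff γ g) :
    coeff β (Phi u v f) = coeff β (Phi u v g) := by
  rw [coeff_Phi, coeff_Phi]
  refine Finset.sum_congr rfl fun p hp => ?_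
  rw [Finset.HasAntidiagonal.mem_antidiagonal] at hp
  have : cf f (β 0) p.1 = cf g (β 0) p.1 := by
    rw [cf, cf]
    exact h (mon (β 0) p.1) (by simp) (by simp; omega)
  rw [this]

lemma mul_dep {f g f' g' : R2 K} {β : Fin 2 →₀ ℕ}
    (hf : ∀ γ : Fin 2 →₀ ℕ, γ 0 ≤ β 0 → γ 1 ≤ β 1 → coeff γ f = coeff γ f')
    (hg : ∀ γ : Fin 2 →₀ ℕ, γ 0 ≤ β 0 → γ 1 ≤ β 1 → coeff γ g = coeff γ g') :
    ∀ γ : Fin 2 →₀ ℕ, γ 0 ≤ β 0 → γ 1 ≤ β 1 → coeff γ (f * g) = coeff γ (f' * g') := by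
  classical
  intro γ h0 h1
  rw [coeff_mul, coeff_mul]
  refine Finset.sum_congr rfl fun p hp => ?_
  rw [Finset.HasAntidiagonal.mem_antidiagonal] at hp
  have e0 : p.1 0 + p.2 0 = γ 0 := by
    have := congrArg (fun f : Fin 2 →₀ ℕ => f 0) hp; simpa using this
  have e1 : p.1 1 + p.2 1 = γ 1 := by
    have := congrArg (fun f : Fin 2 →₀ ℕ => f 1) hp; simpa using this
  rw [hf p.1 (by omega) (by omega), hg p.2 (by omega) (by omega)]

/-- truncation of a 2-variable power series -/
def trunc2 (M N : ℕ) (f : R2 K) : R2 K :=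
  ∑ p ∈ Finset.range (M + 1) ×ˢ Finset.range (N + 1),
    monomial (mon p.1 p.2) (cf f p.1 p.2)

lemma coeff_trunc2 (M N : ℕ) (f : R2 K) (γ : Fin 2 →₀ ℕ) :
    coeff γ (trunc2 M N f) = if γ 0 ≤ M ∧ γ 1 ≤ N then coeff γ f else 0 := by
  classical
  rw [trunc2, map_sum]
  by_cases hc : γ 0 ≤ M ∧ γ 1 ≤ N
  · rw [if_pos hc, Finset.sum_eq_single (γ 0, γ 1)]
    · rw [coeff_monomial, if_pos (mon_eta γ).symm, cf, mon_eta]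
    · intro p hp hne
      rw [coeff_monomial, if_neg]
      intro h
      exact hne (by rcases mon_eq_iff'.1 h.symm with ⟨a, b⟩; exact Prod.ext_iff.2 ⟨a, b⟩)
    · intro h
      exact absurd (Finset.mem_product.2 ⟨Finset.mem_range.2 (by omega),
        Finset.mem_range.2 (by omega)⟩) h
  · rw [if_neg hc]
    refine Finset.sum_eq_zero fun p hp => ?_
    rw [Finset.mem_product, Finset.mem_range, Finset.mem_range] at hp
    rw [coeff_monomial, if_neg]
    intro h
    rcases mon_eq_iff'.1 h.symm with ⟨a, b⟩
    exact hc ⟨by omega, by omega⟩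

lemma Phi_mul_monomial (γ δ : Fin 2 →₀ ℕ) (a b : K) :
    Phi u v (monomial γ a * monomial δ b) =
      Phi u v (monomial γ a) * Phi u v (monomial δ b) := by
  rw [monomial_mul_monomial, Phi_monomial, Phi_monomial, Phi_monomial]
  have h0 : (γ + δ) 0 = γ 0 + δ 0 := rfl
  have h1 : (γ + δ) 1 = γ 1 + δ 1 := rfl
  have hmm : (monomial γ (1 : K)) * monomial δ 1 = monomial (γ + δ) 1 := by
    rw [monomial_mul_monomial, one_mul]
  rw [h0, h1, map_mul, pow_add, pow_add,
    show u ^ γ 0 * u ^ δ 0 * (v ^ γ 1 * v ^ δ 1)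
        = (u ^ γ 0 * v ^ γ 1) * (u ^ δ 0 * v ^ δ 1) by ring,
    iota_mul, ← hmm]
  ring

lemma Phi_mul (f g : R2 K) : Phi u v (f * g) = Phi u v f * Phi u v g := by
  classical
  ext β
  set F := trunc2 (β 0) (β 1) f with hF
  set G := trunc2 (β 0) (β 1) g with hG
  have hf : ∀ γ : Fin 2 →₀ ℕ, γ 0 ≤ β 0 → γ 1 ≤ β 1 → coeff γ f = coeff γ F := by
    intro γ h0 h1
    rw [hF, coeff_trunc2, if_pos ⟨h0, h1⟩]
  have hg : ∀ γ : Fin 2 →₀ ℕ, γ 0 ≤ β 0 → γ 1 ≤ β 1 → coeff γ g = coeff γ G := by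
    intro γ h0 h1
    rw [hG, coeff_trunc2, if_pos ⟨h0, h1⟩]
  have step1 : coeff β (Phi u v (f * g)) = coeff β (Phi u v (F * G)) :=
    Phi_dep u v (mul_dep hf hg)
  have mapsum : ∀ (s : Finset (ℕ × ℕ)) (h : ℕ × ℕ → R2 K),
      Phi u v (∑ p ∈ s, h p) = ∑ p ∈ s, Phi u v (h p) := fun s h => map_sum (PhiAdd u v) h s
  have step2 : Phi u v (F * G) = Phi u v F * Phi u v G := by
    set S := Finset.range (β 0 + 1) ×ˢ Finset.range (β 1 + 1) with hS
    calc Phi u v (F * G)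
        = ∑ p ∈ S, ∑ q ∈ S, Phi u v
            (monomial (mon p.1 p.2) (cf f p.1 p.2) * monomial (mon q.1 q.2) (cf g q.1 q.2)) := by
          rw [hF, hG, trunc2, trunc2, ← hS, Finset.sum_mul_sum, mapsum]
          exact Finset.sum_congr rfl fun p _ => mapsum _ _
      _ = ∑ p ∈ S, ∑ q ∈ S, Phi u v (monomial (mon p.1 p.2) (cf f p.1 p.2)) *
            Phi u v (monomial (mon q.1 q.2) (cf g q.1 q.2)) :=
          Finset.sum_congr rfl fun p _ => Finset.sum_congr rfl fun q _ =>
            Phi_mul_monomial u v _ _ _ _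
      _ = Phi u v F * Phi u v G := by
          rw [hF, hG, trunc2, trunc2, ← hS, mapsum, mapsum, Finset.sum_mul_sum]
  have step3 : coeff β (Phi u v F * Phi u v G) = coeff β (Phi u v f * Phi u v g) := by
    rw [coeff_mul, coeff_mul]
    refine Finset.sum_congr rfl fun p hp => ?_
    rw [Finset.HasAntidiagonal.mem_antidiagonal] at hp
    have e0 : p.1 0 + p.2 0 = β 0 := by
      have := congrArg (fun f : Fin 2 →₀ ℕ => f 0) hp; simpa using this
    have e1 : p.1 1 + p.2 1 = β 1 := by
      have := congrArg (fun f : Fin 2 →₀ ℕ => f 1) hp; simpa using this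
    rw [Phi_dep u v (f := F) (g := f) fun γ a b => (hf γ (by omega) (by omega)).symm,
      Phi_dep u v (f := G) (g := g) fun γ a b => (hg γ (by omega) (by omega)).symm]
  rw [step1, step2, step3]

lemma Phi_X0 : Phi u v (X 0 : R2 K) = iota u * X 0 := by
  have hX : (X 0 : R2 K) = monomial (Finsupp.single 0 1) 1 := by
    rw [← pow_one (X 0 : R2 K), X_pow_eq]
  rw [hX, Phi_monomial]
  simp [Finsupp.single_apply, iota_one, ← hX]

lemma Phi_X1 : Phi u v (X 1 : R2 K) = iota v * X 1 := by
  have hX : (X 1 : R2 K) = monomial (Finsupp.single 1 1) 1 := by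
    rw [← pow_one (X 1 : R2 K), X_pow_eq]
  rw [hX, Phi_monomial]
  simp [Finsupp.single_apply, iota_one, ← hX]

/-- one-variable composition `w(v·y)` -/
def comp1 (w : PowerSeries K) : PowerSeries K :=
  PowerSeries.mk fun n => ∑ p ∈ Finset.HasAntidiagonal.antidiagonal n,
    PowerSeries.coeff p.1 w * PowerSeries.coeff p.2 (v ^ p.1)

lemma Phi_iota (w : PowerSeries K) : Phi u v (iota w) = iota (comp1 v w) := by
  ext β
  rw [coeff_Phi, coeff_iota]
  by_cases h0 : β 0 = 0
  · rw [if_pos h0, comp1, PowerSeries.coeff_mk]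
    refine Finset.sum_congr rfl fun p hp => ?_
    rw [cf_iota, if_pos h0, h0, pow_zero, one_mul]
  · rw [if_neg h0]
    refine Finset.sum_eq_zero fun p hp => ?_
    rw [cf_iota, if_neg h0, zero_mul]

end Phi
section Bij
variable (u v : PowerSeries K)

/-- coefficients of the preimage under `Phi`, by strong recursion -/
def invC (g : R2 K) (m : ℕ) : ℕ → K
  | n => (coeff (mon m n) g - ∑ k ∈ (Finset.range n).attach,
      invC g m k * PowerSeries.coeff (n - (k : ℕ)) (u ^ m * v ^ (k : ℕ))) *
      ((PowerSeries.constantCoeff u ^ m) * (PowerSeries.constantCoeff v ^ n))⁻¹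
  decreasing_by exact Finset.mem_range.mp k.2

variable {u v}

lemma coeff_zero_pow_mul (m n : ℕ) :
    PowerSeries.coeff 0 (u ^ m * v ^ n) =
      PowerSeries.constantCoeff u ^ m * PowerSeries.constantCoeff v ^ n := by
  rw [PowerSeries.coeff_zero_eq_constantCoeff_apply, map_mul, map_pow, map_pow]

variable (hu : PowerSeries.constantCoeff u ≠ 0) (hv : PowerSeries.constantCoeff v ≠ 0)
include hu hv

lemma Phi_surj_aux (g : R2 K) (m n : ℕ) :
    coeff (mon m n) (Phi u v (fun β => invC u v g (β 0) (β 1))) = coeff (mon m n) g := by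
  have hc : PowerSeries.constantCoeff u ^ m * PowerSeries.constantCoeff v ^ n ≠ 0 :=
    mul_ne_zero (pow_ne_zero _ hu) (pow_ne_zero _ hv)
  refine (coeff_Phi u v _ (mon m n)).trans ?_
  simp only [mon_apply0, mon_apply1]
  rw [Finset.Nat.sum_antidiagonal_eq_sum_range_succ_mk, Finset.sum_range_succ]
  have hcf : ∀ k : ℕ, cf (fun β => invC u v g (β 0) (β 1) : R2 K) m k = invC u v g m k := by
    intro k
    show (fun β => invC u v g (β 0) (β 1)) (mon m k) = _
    simp
  simp only [hcf]
  rw [Nat.sub_self, coeff_zero_pow_mul, invC]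
  rw [Finset.sum_attach (Finset.range n) (fun k => invC u v g m k *
    PowerSeries.coeff (n - k) (u ^ m * v ^ k))]
  field_simp
  ring

lemma Phi_surjective : Function.Surjective (Phi u v) := by
  intro g
  refine ⟨fun β => invC u v g (β 0) (β 1), ?_⟩
  ext β
  rw [← mon_eta β]
  exact Phi_surj_aux hu hv g (β 0) (β 1)

lemma Phi_injective : Function.Injective (Phi u v) := by
  intro f₁ f₂ h
  have key : ∀ n m, cf f₁ m n = cf f₂ m n := by
    intro n
    induction n using Nat.strong_induction_on with
    | _ n IH =>
      intro m
      have hcoe := congrArg (coeff (mon m n)) h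
      rw [coeff_Phi, coeff_Phi] at hcoe
      simp only [mon_apply0, mon_apply1] at hcoe
      rw [Finset.Nat.sum_antidiagonal_eq_sum_range_succ_mk,
        Finset.Nat.sum_antidiagonal_eq_sum_range_succ_mk,
        Finset.sum_range_succ, Finset.sum_range_succ] at hcoe
      rw [Finset.sum_congr rfl (fun k hk => by
        rw [IH k (Finset.mem_range.mp hk) m] :
        ∀ k ∈ Finset.range n, cf f₁ m k * PowerSeries.coeff (n - k) (u ^ m * v ^ k)
          = cf f₂ m k * PowerSeries.coeff (n - k) (u ^ m * v ^ k))] at hcoe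
      have h2 := add_left_cancel hcoe
      rw [Nat.sub_self, coeff_zero_pow_mul] at h2
      exact mul_right_cancel₀
        (mul_ne_zero (pow_ne_zero _ hu) (pow_ne_zero _ hv)) h2
  ext β
  rw [← mon_eta β, ← cf, ← cf]
  exact key (β 1) (β 0)

end Bij

section Hom
variable (u v : PowerSeries K)

/-- `Phi` as an algebra hom. -/
def PhiAlg : R2 K →ₐ[K] R2 K where
  toFun := Phi u v
  map_one' := Phi_one u v
  map_mul' := Phi_mul u v
  map_zero' := Phi_zero u v
  map_add' := Phi_add u v
  commutes' := fun c => by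
    simp only [← c_eq_algebraMap]
    exact Phi_C u v c

end Hom
section Implicit
open PowerSeries

/-- two power series agree below degree `m` -/
def agree (m : ℕ) (w w' : PowerSeries K) : Prop :=
  ∀ i < m, PowerSeries.coeff i w = PowerSeries.coeff i w'

lemma agree_iff_dvd {m : ℕ} {w w' : PowerSeries K} :
    agree m w w' ↔ (PowerSeries.X : PowerSeries K) ^ m ∣ w - w' := by
  rw [PowerSeries.X_pow_dvd_iff]
  constructor
  · intro h i hi; rw [map_sub, h i hi, sub_self]
  · intro h i hi; have := h i hi; rw [map_sub, sub_eq_zero] at this; exact this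

lemma agree_pow {m : ℕ} {w w' : PowerSeries K} (h : agree m w w') (k : ℕ) :
    agree m (w ^ k) (w' ^ k) := by
  rw [agree_iff_dvd] at h ⊢
  induction k with
  | zero => simp
  | succ k ih =>
    have : w ^ (k + 1) - w' ^ (k + 1) = w ^ k * (w - w') + (w ^ k - w' ^ k) * w' := by ring
    rw [this]
    exact dvd_add (Dvd.dvd.mul_left h _) (Dvd.dvd.mul_right ih _)

lemma coeff_comp1 (v w : PowerSeries K) (n : ℕ) :
    PowerSeries.coeff n (comp1 v w) = ∑ p ∈ Finset.HasAntidiagonal.antidiagonal n,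
      PowerSeries.coeff p.1 w * PowerSeries.coeff p.2 (v ^ p.1) := by
  rw [comp1, PowerSeries.coeff_mk]

lemma constantCoeff_comp1 (v w : PowerSeries K) :
    PowerSeries.constantCoeff (comp1 v w) = PowerSeries.constantCoeff w := by
  rw [← PowerSeries.coeff_zero_eq_constantCoeff_apply, coeff_comp1,
    ← PowerSeries.coeff_zero_eq_constantCoeff_apply]
  rw [Finset.Nat.antidiagonal_zero, Finset.sum_singleton]
  simp

lemma agree_comp1 {m : ℕ} {v v' : PowerSeries K} (h : agree m v v') (w : PowerSeries K) :
    agree (m + 1) (comp1 v w) (comp1 v' w) := by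
  intro n hn
  rw [coeff_comp1, coeff_comp1]
  refine Finset.sum_congr rfl fun p hp => ?_
  rw [Finset.HasAntidiagonal.mem_antidiagonal] at hp
  rcases Nat.eq_zero_or_pos p.1 with h1 | h1
  · rw [h1]; simp
  · have hlt : p.2 < m := by omega
    rw [agree_pow h p.1 p.2 hlt]

/-- extraction: if `X^m ∣ D` then the `m`-th coeff of `D*w` is multiplicative. -/
lemma coeff_dvd_mul {m : ℕ} {D : PowerSeries K} (h : (PowerSeries.X : PowerSeries K) ^ m ∣ D)
    (w : PowerSeries K) :
    PowerSeries.coeff m (D * w) = PowerSeries.coeff m D * PowerSeries.constantCoeff w := by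
  obtain ⟨D', rfl⟩ := h
  rw [mul_assoc]
  have h1 := PowerSeries.coeff_X_pow_mul (D' * w) m 0
  have h2 := PowerSeries.coeff_X_pow_mul D' m 0
  rw [zero_add] at h1 h2
  rw [h1, h2, PowerSeries.coeff_zero_eq_constantCoeff_apply,
    PowerSeries.coeff_zero_eq_constantCoeff_apply, map_mul]

lemma coeff_perturb (n : ℕ) (δ : K) (i : ℕ) (hi : i < n + 1) :
    PowerSeries.coeff i (PowerSeries.C δ * PowerSeries.X ^ (n + 1)) = 0 := by
  rw [PowerSeries.coeff_C_mul, PowerSeries.coeff_X_pow, if_neg (by omega), mul_zero]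

lemma agree_perturb (n : ℕ) (δ : K) (w : PowerSeries K) :
    agree (n + 1) (w + PowerSeries.C δ * PowerSeries.X ^ (n + 1)) w := by
  intro i hi
  rw [map_add, coeff_perturb n δ i hi, add_zero]

lemma constantCoeff_perturb (n : ℕ) (δ : K) (w : PowerSeries K) :
    PowerSeries.constantCoeff (w + PowerSeries.C δ * PowerSeries.X ^ (n + 1)) =
      PowerSeries.constantCoeff w := by
  rw [map_add, ← PowerSeries.coeff_zero_eq_constantCoeff_apply (PowerSeries.C δ * _),
    coeff_perturb n δ 0 (by omega), add_zero]

lemma coeff_pow_perturb (w : PowerSeries K) (n : ℕ) (δ : K) (k : ℕ) :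
    PowerSeries.coeff (n + 1) ((w + PowerSeries.C δ * PowerSeries.X ^ (n + 1)) ^ k) =
      PowerSeries.coeff (n + 1) (w ^ k) +
        (k : K) * PowerSeries.constantCoeff w ^ (k - 1) * δ := by
  set h : PowerSeries K := PowerSeries.C δ * PowerSeries.X ^ (n + 1) with hh
  set c := PowerSeries.constantCoeff w with hc
  induction k with
  | zero => simp
  | succ k ih =>
    have expand : (w + h) ^ (k + 1) = ((w + h) ^ k - w ^ k) * w + (w + h) ^ k * h + w ^ k * w := by
      ring
    have hdvd : (PowerSeries.X : PowerSeries K) ^ (n + 1) ∣ (w + h) ^ k - w ^ k :=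
      agree_iff_dvd.1 (agree_pow (agree_perturb n δ w) k)
    have e1 : PowerSeries.coeff (n + 1) (((w + h) ^ k - w ^ k) * w) =
        ((k : K) * c ^ (k - 1) * δ) * c := by
      rw [coeff_dvd_mul hdvd w, map_sub]
      have ihd : PowerSeries.coeff (n + 1) ((w + h) ^ k) -
          PowerSeries.coeff (n + 1) (w ^ k) = (k : K) * c ^ (k - 1) * δ := by
        rw [ih]; ring
      rw [ihd, ← hc]
    have e2 : PowerSeries.coeff (n + 1) ((w + h) ^ k * h) = δ * c ^ k := by
      rw [hh, show (w + h) ^ k * (PowerSeries.C δ * PowerSeries.X ^ (n + 1)) =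
        PowerSeries.C δ * (PowerSeries.X ^ (n + 1) * (w + h) ^ k) by ring,
        PowerSeries.coeff_C_mul]
      have h3 := PowerSeries.coeff_X_pow_mul ((w + h) ^ k) (n + 1) 0
      rw [zero_add] at h3
      rw [h3, PowerSeries.coeff_zero_eq_constantCoeff_apply, map_pow, hh,
        constantCoeff_perturb n δ w]
    rw [expand, map_add, map_add, e1, e2, ← pow_succ]
    have key : ((k : K) * c ^ (k - 1) * δ) * c + δ * c ^ k =
        ((k + 1 : ℕ) : K) * c ^ (k + 1 - 1) * δ := by
      cases k with
      | zero => simp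
      | succ k =>
        rw [Nat.add_sub_cancel, Nat.add_sub_cancel]
        push_cast
        ring
    linear_combination key

end Implicit
section Newton

def Gfun (a b : ℕ) (ec w : PowerSeries K) : PowerSeries K :=
  w ^ a - w ^ b * (comp1 w ec) ^ 2

lemma coeff_zero_Gfun (a b : ℕ) (ec w : PowerSeries K) :
    PowerSeries.coeff 0 (Gfun a b ec w) =
      PowerSeries.constantCoeff w ^ a -
        PowerSeries.constantCoeff w ^ b * PowerSeries.constantCoeff ec ^ 2 := by
  rw [Gfun, PowerSeries.coeff_zero_eq_constantCoeff_apply, map_sub, map_mul, map_pow,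
    map_pow, map_pow, constantCoeff_comp1]

lemma agree_Gfun {m : ℕ} {w w' : PowerSeries K} (h : agree m w w') (a b : ℕ)
    (ec : PowerSeries K) : agree m (Gfun a b ec w) (Gfun a b ec w') := by
  rw [agree_iff_dvd]
  have d1 : (PowerSeries.X : PowerSeries K) ^ m ∣ w ^ a - w' ^ a :=
    agree_iff_dvd.1 (agree_pow h a)
  have db : (PowerSeries.X : PowerSeries K) ^ m ∣ w ^ b - w' ^ b :=
    agree_iff_dvd.1 (agree_pow h b)
  have dE : (PowerSeries.X : PowerSeries K) ^ m ∣ comp1 w ec - comp1 w' ec := by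
    have := agree_iff_dvd.1 (agree_comp1 h ec)
    exact dvd_trans (pow_dvd_pow _ (Nat.le_succ m)) this
  have dE2 : (PowerSeries.X : PowerSeries K) ^ m ∣ (comp1 w ec) ^ 2 - (comp1 w' ec) ^ 2 := by
    have : (comp1 w ec) ^ 2 - (comp1 w' ec) ^ 2 =
        (comp1 w ec + comp1 w' ec) * (comp1 w ec - comp1 w' ec) := by ring
    rw [this]
    exact Dvd.dvd.mul_left dE _
  have expand : Gfun a b ec w - Gfun a b ec w' =
      (w ^ a - w' ^ a) - (w ^ b * ((comp1 w ec) ^ 2 - (comp1 w' ec) ^ 2) +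
        (w ^ b - w' ^ b) * (comp1 w' ec) ^ 2) := by
    rw [Gfun, Gfun]; ring
  rw [expand]
  exact dvd_sub d1 (dvd_add (Dvd.dvd.mul_left dE2 _) (Dvd.dvd.mul_right db _))

lemma coeff_Gfun_perturb (a b : ℕ) (ec w : PowerSeries K) (n : ℕ) (δ : K) :
    PowerSeries.coeff (n + 1) (Gfun a b ec (w + PowerSeries.C δ * PowerSeries.X ^ (n + 1)))
      = PowerSeries.coeff (n + 1) (Gfun a b ec w) +
        δ * ((a : K) * PowerSeries.constantCoeff w ^ (a - 1) -
          (b : K) * PowerSeries.constantCoeff w ^ (b - 1) *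
            PowerSeries.constantCoeff ec ^ 2) := by
  set h : PowerSeries K := PowerSeries.C δ * PowerSeries.X ^ (n + 1) with hh
  set w' := w + h with hw'
  set c := PowerSeries.constantCoeff w with hc
  set E := comp1 w ec with hE
  set E' := comp1 w' ec with hE'
  have expand : Gfun a b ec w' - Gfun a b ec w =
      (w' ^ a - w ^ a) - (w' ^ b * (E' ^ 2 - E ^ 2) + (w' ^ b - w ^ b) * E ^ 2) := by
    rw [Gfun, Gfun, ← hE, ← hE']; ring
  have e1 : PowerSeries.coeff (n + 1) (w' ^ a - w ^ a) = (a : K) * c ^ (a - 1) * δ := by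
    rw [map_sub, hw', hh, coeff_pow_perturb, ← hc]; ring
  have eb : PowerSeries.coeff (n + 1) (w' ^ b - w ^ b) = (b : K) * c ^ (b - 1) * δ := by
    rw [map_sub, hw', hh, coeff_pow_perturb, ← hc]; ring
  have e2 : PowerSeries.coeff (n + 1) (w' ^ b * (E' ^ 2 - E ^ 2)) = 0 := by
    have hag : agree (n + 2) E' E := by
      rw [hE', hE]
      exact agree_comp1 (m := n + 1) (by rw [hw', hh]; exact agree_perturb n δ w) ec
    have hdvd : (PowerSeries.X : PowerSeries K) ^ (n + 2) ∣ w' ^ b * (E' ^ 2 - E ^ 2) := by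
      have : E' ^ 2 - E ^ 2 = (E' + E) * (E' - E) := by ring
      rw [this]
      exact Dvd.dvd.mul_left (Dvd.dvd.mul_left (agree_iff_dvd.1 hag) _) _
    exact PowerSeries.X_pow_dvd_iff.1 hdvd (n + 1) (by omega)
  have e3 : PowerSeries.coeff (n + 1) ((w' ^ b - w ^ b) * E ^ 2) =
      ((b : K) * c ^ (b - 1) * δ) * PowerSeries.constantCoeff ec ^ 2 := by
    have hdvd : (PowerSeries.X : PowerSeries K) ^ (n + 1) ∣ w' ^ b - w ^ b := by
      refine agree_iff_dvd.1 (agree_pow ?_ b)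
      rw [hw', hh]; exact agree_perturb n δ w
    rw [coeff_dvd_mul hdvd, eb, map_pow, hE, constantCoeff_comp1]
  have := congrArg (PowerSeries.coeff (n + 1)) expand
  rw [map_sub, map_sub, map_add, e1, e2, e3] at this
  linear_combination this

variable (a b : ℕ) (ec : PowerSeries K) (c κ : K)

/-- Newton iteration sequence -/
def Wseq : ℕ → PowerSeries K
  | 0 => PowerSeries.C c
  | n + 1 => Wseq n + PowerSeries.C
      (- PowerSeries.coeff (n + 1) (Gfun a b ec (Wseq n)) / κ) * PowerSeries.X ^ (n + 1)

lemma Wseq_const (n : ℕ) : PowerSeries.constantCoeff (Wseq a b ec c κ n) = c := by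
  induction n with
  | zero => rw [Wseq, PowerSeries.constantCoeff_C]
  | succ n ih => rw [Wseq, constantCoeff_perturb, ih]

lemma Wseq_agree (n : ℕ) : agree (n + 1) (Wseq a b ec c κ (n + 1)) (Wseq a b ec c κ n) := by
  rw [Wseq]
  exact agree_perturb _ _ _

lemma Wseq_stab {i n n' : ℕ} (h : n ≤ n') (hi : i < n + 1) :
    PowerSeries.coeff i (Wseq a b ec c κ n') = PowerSeries.coeff i (Wseq a b ec c κ n) := by
  induction n', h using Nat.le_induction with
  | base => rfl
  | succ n' hn ih => rw [Wseq_agree a b ec c κ n' i (by omega), ih]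

variable {a b ec c κ}
variable (hκ : (a : K) * c ^ (a - 1) - (b : K) * c ^ (b - 1) * PowerSeries.constantCoeff ec ^ 2 = κ)
  (hκ0 : κ ≠ 0) (hroot : c ^ a = c ^ b * PowerSeries.constantCoeff ec ^ 2)
include hκ hκ0 hroot

lemma Wseq_G (n : ℕ) : ∀ m ≤ n, PowerSeries.coeff m (Gfun a b ec (Wseq a b ec c κ n)) = 0 := by
  induction n with
  | zero =>
    intro m hm
    interval_cases m
    rw [coeff_zero_Gfun, Wseq, PowerSeries.constantCoeff_C, hroot, sub_self]
  | succ n ih =>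
    intro m hm
    rcases Nat.lt_or_ge m (n + 1) with h | h
    · rw [agree_Gfun (Wseq_agree a b ec c κ n) a b ec m h]
      exact ih m (by omega)
    · have hm' : m = n + 1 := by omega
      subst hm'
      rw [Wseq, coeff_Gfun_perturb, Wseq_const, hκ, div_mul_cancel₀ _ hκ0]
      ring

/-- the solution -/
def vsol : PowerSeries K :=
  PowerSeries.mk fun n => PowerSeries.coeff n (Wseq a b ec c κ n)

omit hκ hκ0 hroot in
lemma vsol_agree (n : ℕ) : agree (n + 1) (vsol (a := a) (b := b) (ec := ec) (c := c) (κ := κ))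
    (Wseq a b ec c κ n) := by
  intro i hi
  rw [vsol, PowerSeries.coeff_mk]
  exact (Wseq_stab a b ec c κ (by omega) (by omega)).symm

omit hκ hκ0 hroot in
lemma vsol_const : PowerSeries.constantCoeff (vsol (a := a) (b := b) (ec := ec) (c := c) (κ := κ)) = c := by
  rw [← PowerSeries.coeff_zero_eq_constantCoeff_apply, vsol, PowerSeries.coeff_mk,
    PowerSeries.coeff_zero_eq_constantCoeff_apply, Wseq_const]

lemma vsol_root : Gfun a b ec (vsol (a := a) (b := b) (ec := ec) (c := c) (κ := κ)) = 0 := by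
  ext m
  rw [agree_Gfun (vsol_agree (a := a) (b := b) (ec := ec) (c := c) (κ := κ) m) a b ec m (by omega),
    Wseq_G hκ hκ0 hroot m m le_rfl, map_zero]

end Newton

section Root
variable [IsAlgClosed K]

lemma exists_root_ab {a b : ℕ} (hab : a ≠ b) {e0 : K} (he0 : e0 ≠ 0) :
    ∃ c : K, c ≠ 0 ∧ c ^ a = c ^ b * e0 ^ 2 := by
  rcases Nat.lt_or_ge a b with h | h
  · obtain ⟨z, hz⟩ := IsAlgClosed.exists_root
      (Polynomial.X ^ (b - a) - Polynomial.C ((e0 ^ 2)⁻¹)) (by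
        rw [Polynomial.degree_X_pow_sub_C (by omega)]
        exact_mod_cast (by omega : (b - a : ℕ) ≠ 0) ∘ fun hc => by exact_mod_cast hc)
    rw [Polynomial.IsRoot, Polynomial.eval_sub, Polynomial.eval_pow, Polynomial.eval_X,
      Polynomial.eval_C, sub_eq_zero] at hz
    have hz0 : z ≠ 0 := by
      intro h0
      rw [h0, zero_pow (by omega : b - a ≠ 0)] at hz
      exact (inv_ne_zero (pow_ne_zero 2 he0)) hz.symm
    refine ⟨z, hz0, ?_⟩
    have hb : z ^ b = z ^ a * z ^ (b - a) := by rw [← pow_add]; congr 1; omega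
    rw [hb, hz, mul_assoc, inv_mul_cancel₀ (pow_ne_zero 2 he0), mul_one]
  · obtain ⟨z, hz⟩ := IsAlgClosed.exists_root
      (Polynomial.X ^ (a - b) - Polynomial.C (e0 ^ 2)) (by
        rw [Polynomial.degree_X_pow_sub_C (by omega)]
        exact_mod_cast (by omega : (a - b : ℕ) ≠ 0) ∘ fun hc => by exact_mod_cast hc)
    rw [Polynomial.IsRoot, Polynomial.eval_sub, Polynomial.eval_pow, Polynomial.eval_X,
      Polynomial.eval_C, sub_eq_zero] at hz
    have hz0 : z ≠ 0 := by
      intro h0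
      rw [h0, zero_pow (by omega : a - b ≠ 0)] at hz
      exact (pow_ne_zero 2 he0) hz.symm
    refine ⟨z, hz0, ?_⟩
    have : z ^ a = z ^ b * z ^ (a - b) := by rw [← pow_add]; congr 1; omega
    rw [this, hz]

end Root
section Final

lemma iota_isUnit {w : PowerSeries K} (hw : PowerSeries.constantCoeff w ≠ 0) :
    IsUnit (iota w) :=
  IsUnit.of_mul_eq_one (iota w⁻¹)
    (by rw [← iota_mul, PowerSeries.mul_inv_cancel _ hw, iota_one])

lemma span_pair_unit {R : Type*} [CommRing R] {A B : R} (x y : R)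
    (hA : IsUnit A) (hB : IsUnit B) :
    Ideal.span {A * x, B * y} = Ideal.span {x, y} := by
  apply le_antisymm
  · rw [Ideal.span_le]
    intro z hz
    simp only [Set.mem_insert_iff, Set.mem_singleton_iff] at hz
    rcases hz with rfl | rfl
    · exact Ideal.mul_mem_left _ A (Ideal.subset_span (by simp))
    · exact Ideal.mul_mem_left _ B (Ideal.subset_span (by simp))
  · rw [Ideal.span_le]
    intro z hz
    simp only [Set.mem_insert_iff, Set.mem_singleton_iff] at hz
    rcases hz with rfl | rfl
    · obtain ⟨Au, hAu⟩ := hA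
      have hx : z = ↑Au⁻¹ * (A * z) := by rw [← hAu, ← mul_assoc, Units.inv_mul, one_mul]
      have hm := Ideal.mul_mem_left (Ideal.span {A * z, B * y}) (↑Au⁻¹)
        (Ideal.subset_span (show A * z ∈ ({A * z, B * y} : Set R) by simp))
      rwa [← hx] at hm
    · obtain ⟨Bu, hBu⟩ := hB
      have hy : z = ↑Bu⁻¹ * (B * z) := by rw [← hBu, ← mul_assoc, Units.inv_mul, one_mul]
      have hm := Ideal.mul_mem_left (Ideal.span {A * x, B * z}) (↑Bu⁻¹)
        (Ideal.subset_span (show B * z ∈ ({A * x, B * z} : Set R) by simp))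
      rwa [← hy] at hm

end Final
end CEaux


/-- For `t > q ≥ 1`, `s ≥ 3`, `2t - 2q - s ≠ 0` not divisible by the characteristic,
and `e` a unit of `K[[y]]`, `(x² + y^s, y^t + e x y^q)` is contact equivalent to
`(x² + y^s, y^t + x y^q)`. -/
theorem contact_equiv_unit_absorb_weighted [IsAlgClosed K] {p : ℕ} [CharP K p]
    (t q s : ℕ) (hq : 1 ≤ q) (htq : q < t) (hs : 3 ≤ s)
    (hne : 2 * (t : ℤ) - 2 * q - s ≠ 0)
    (hp : ¬ ((p : ℤ) ∣ 2 * (t : ℤ) - 2 * q - s))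
    (e : R2 K) (he : OnlyY K e) (heu : IsUnit e) :
    ContactEquiv K (X 0 ^ 2 + X 1 ^ s, X 1 ^ t + e * X 0 * X 1 ^ q)
      (X 0 ^ 2 + X 1 ^ s, X 1 ^ t + X 0 * X 1 ^ q) := by
  classical
  open CEaux in
  -- the one-variable version of e
  set ec : PowerSeries K := PowerSeries.mk fun n => cf e 0 n with hec
  have hiotaec : iota ec = e := iota_eq_self he
  set e0 : K := PowerSeries.constantCoeff ec with he0def
  have he0 : e0 ≠ 0 := by
    have h1 : IsUnit (constantCoeff e) := heu.map _
    have h2 : e0 = constantCoeff e := by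
      rw [he0def, ← PowerSeries.coeff_zero_eq_constantCoeff_apply, hec,
        PowerSeries.coeff_mk, cf, mon_zero, coeff_zero_eq_constantCoeff_apply]
    rw [h2]
    exact h1.ne_zero
  set a : ℕ := 2 * (t - q) with ha
  set b : ℕ := s with hb
  have hab : a ≠ b := by
    intro h
    apply hne
    rw [ha, hb] at h
    omega
  obtain ⟨c, hc0, hroot⟩ := exists_root_ab (K := K) hab he0
  set κ : K := (a : K) * c ^ (a - 1) - (b : K) * c ^ (b - 1) * e0 ^ 2 with hκ
  have hdiff : (a : K) - (b : K) ≠ 0 := by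
    have hcast : ((2 * (t : ℤ) - 2 * q - s : ℤ) : K) ≠ 0 := by
      rw [Ne, CharP.intCast_eq_zero_iff K p]
      exact hp
    have : ((2 * (t : ℤ) - 2 * q - s : ℤ) : K) = (a : K) - (b : K) := by
      rw [ha, hb]
      push_cast [Nat.cast_sub htq.le]
      ring
    rwa [this] at hcast
  have hκ0 : κ ≠ 0 := by
    have h1 : c ^ (a - 1) * c = c ^ a := by
      rw [← pow_succ]
      congr 1
      omega
    have h2 : c ^ (b - 1) * c = c ^ b := by
      rw [← pow_succ]
      congr 1
      omega
    have hκc : κ * c = ((a : K) - (b : K)) * c ^ a := by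
      calc κ * c = (a : K) * (c ^ (a - 1) * c) - (b : K) * (c ^ (b - 1) * c) * e0 ^ 2 := by
            rw [hκ]; ring
        _ = (a : K) * c ^ a - (b : K) * (c ^ b * e0 ^ 2) := by rw [h1, h2]; ring
        _ = (a : K) * c ^ a - (b : K) * c ^ a := by rw [← hroot]
        _ = ((a : K) - (b : K)) * c ^ a := by ring
    intro h0
    apply mul_ne_zero hdiff (pow_ne_zero a hc0)
    rw [← hκc, h0, zero_mul]
  -- the solution v of v^a = v^b * (comp1 v ec)^2
  set v : PowerSeries K := vsol (a := a) (b := b) (ec := ec) (c := c) (κ := κ) with hv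
  have hvc : PowerSeries.constantCoeff v = c := vsol_const
  have hvc0 : PowerSeries.constantCoeff v ≠ 0 := by rw [hvc]; exact hc0
  have hGv : Gfun a b ec v = 0 := vsol_root (by rw [← he0def, ← hκ]) hκ0 (by rw [← he0def]; exact hroot)
  have hva : v ^ a = v ^ b * (comp1 v ec) ^ 2 := by
    have := hGv
    rw [Gfun, sub_eq_zero] at this
    exact this
  set E : PowerSeries K := comp1 v ec with hE
  have hE0 : PowerSeries.constantCoeff E = e0 := by
    rw [hE, constantCoeff_comp1, he0def]
  have hE0' : PowerSeries.constantCoeff E ≠ 0 := by rw [hE0]; exact he0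
  have hEinv : E * E⁻¹ = 1 := PowerSeries.mul_inv_cancel _ hE0'
  set u : PowerSeries K := v ^ (t - q) * E⁻¹ with hu
  have huc0 : PowerSeries.constantCoeff u ≠ 0 := by
    rw [hu, map_mul, map_pow, PowerSeries.constantCoeff_inv, hvc, hE0]
    exact mul_ne_zero (pow_ne_zero _ hc0) (inv_ne_zero he0)
  have rel2 : u * E * v ^ q = v ^ t := by
    rw [hu]
    calc v ^ (t - q) * E⁻¹ * E * v ^ q = v ^ (t - q) * v ^ q * (E * E⁻¹) := by ring
      _ = v ^ (t - q) * v ^ q * 1 := by rw [hEinv]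
      _ = v ^ t := by rw [mul_one, ← pow_add]; congr 1; omega
  have rel1 : u ^ 2 = v ^ s := by
    have hpa : (v ^ (t - q)) ^ 2 = v ^ a := by
      rw [← pow_mul, ha]
      congr 1
      ring
    calc u ^ 2 = (v ^ (t - q)) ^ 2 * (E⁻¹) ^ 2 := by rw [hu, mul_pow]
      _ = v ^ a * (E⁻¹) ^ 2 := by rw [hpa]
      _ = v ^ b * (E ^ 2 * (E⁻¹) ^ 2) := by rw [hva]; ring
      _ = v ^ b * (E * E⁻¹) ^ 2 := by rw [mul_pow]
      _ = v ^ s := by rw [hEinv, one_pow, mul_one, hb]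
  -- the automorphism
  have hbij : Function.Bijective (PhiAlg u v) :=
    ⟨Phi_injective huc0 hvc0, Phi_surjective huc0 hvc0⟩
  refine ⟨AlgEquiv.ofBijective (PhiAlg u v) hbij, ?_⟩
  have hcoe : ∀ x : R2 K,
      (AlgEquiv.ofBijective (PhiAlg u v) hbij).toAlgHom.toRingHom x = Phi u v x :=
    fun x => rfl
  rw [Ideal.map_span, Set.image_pair]
  rw [hcoe, hcoe]
  have hA1 : Phi u v (X 0 ^ 2 + X 1 ^ s) = iota (v ^ s) * (X 0 ^ 2 + X 1 ^ s) := by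
    have := map_add (PhiAlg u v) (X 0 ^ 2) (X 1 ^ s)
    have h2 := map_pow (PhiAlg u v) (X 0) 2
    have h3 := map_pow (PhiAlg u v) (X 1) s
    simp only [PhiAlg, AlgHom.coe_mk, RingHom.coe_mk, MonoidHom.coe_mk, OneHom.coe_mk] at this h2 h3
    rw [this, h2, h3, Phi_X0, Phi_X1, mul_pow, mul_pow, ← iota_pow, ← iota_pow, rel1, mul_add]
  have hPe : Phi u v e = iota E := by
    conv_lhs => rw [← hiotaec]
    rw [Phi_iota, hE]
  have hA2 : Phi u v (X 1 ^ t + e * X 0 * X 1 ^ q) =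
      iota (v ^ t) * (X 1 ^ t + X 0 * X 1 ^ q) := by
    have h1 := map_add (PhiAlg u v) (X 1 ^ t) (e * X 0 * X 1 ^ q)
    have h2 := map_pow (PhiAlg u v) (X 1) t
    have h3 := map_pow (PhiAlg u v) (X 1) q
    have h4 := map_mul (PhiAlg u v) (e * X 0) (X 1 ^ q)
    have h5 := map_mul (PhiAlg u v) e (X 0)
    simp only [PhiAlg, AlgHom.coe_mk, RingHom.coe_mk, MonoidHom.coe_mk, OneHom.coe_mk]
      at h1 h2 h3 h4 h5
    rw [h1, h2, h4, h5, h3, Phi_X0, Phi_X1, hPe]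
    have hcoef : iota u * iota E * iota v ^ q = iota (v ^ t) := by
      rw [← iota_pow, ← iota_mul, ← iota_mul, rel2]
    calc (iota v * X 1) ^ t + iota E * (iota u * X 0) * (iota v * X 1) ^ q
        = iota v ^ t * X 1 ^ t + (iota u * iota E * iota v ^ q) * (X 0 * X 1 ^ q) := by
          rw [mul_pow, mul_pow]; ring
      _ = iota v ^ t * X 1 ^ t + iota (v ^ t) * (X 0 * X 1 ^ q) := by rw [hcoef]
      _ = iota (v ^ t) * (X 1 ^ t + X 0 * X 1 ^ q) := by rw [iota_pow]; ring
  rw [hA1, hA2]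
  exact span_pair_unit _ _
    (iota_isUnit (by rw [map_pow, hvc]; exact pow_ne_zero _ hc0))
    (iota_isUnit (by rw [map_pow, hvc]; exact pow_ne_zero _ hc0))

end
end

section
/- Let K be an algebraically closed field of characteristic 2 and a, b ∈ K with a ≠ 0 and a·b ≠ 1. Then (x² + a x y, y² + b x y) is contact equivalent to (x y, x² + y²) in K[[x,y]]. -/
open MvPowerSeries

noncomputable section

variable (K : Type) [Field K]

namespace CTAux

variable {K}

/-- total degree of a monomial exponent -/
def deg (α : Fin 2 →₀ ℕ) : ℕ := α 0 + α 1

lemma deg_add (u v : Fin 2 →₀ ℕ) : deg (u + v) = deg u + deg v := by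
  simp [deg, Finsupp.add_apply]; ring

/-- the "box" of exponents with all entries ≤ n -/
def dN (n : ℕ) : Fin 2 →₀ ℕ := Finsupp.single 0 n + Finsupp.single 1 n

lemma dN_apply (n : ℕ) (i : Fin 2) : dN n i = n := by
  fin_cases i <;> simp [dN, Finsupp.single_apply]

lemma le_dN {β : Fin 2 →₀ ℕ} {n : ℕ} (h : deg β ≤ n) : β ≤ dN n := by
  intro i
  rw [dN_apply]
  refine le_trans ?_ h
  fin_cases i
  · exact Nat.le_add_right _ _
  · exact Nat.le_add_left _ _

lemma dN_mono {m n : ℕ} (h : m ≤ n) : dN m ≤ dN n := by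
  intro i; rw [dN_apply, dN_apply]; exact h

/-- homogeneity of degree n -/
def IsHomog (n : ℕ) (f : R2 K) : Prop := ∀ α, deg α ≠ n → coeff (R := K) α f = 0

lemma IsHomog.add {m : ℕ} {f g : R2 K} (hf : IsHomog m f) (hg : IsHomog m g) :
    IsHomog m (f + g) := fun α hα => by
  rw [map_add, hf α hα, hg α hα, add_zero]

lemma IsHomog.mul {m n : ℕ} {f g : R2 K} (hf : IsHomog m f) (hg : IsHomog n g) :
    IsHomog (m + n) (f * g) := by
  intro α hα
  rw [coeff_mul]
  apply Finset.sum_eq_zero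
  intro p hp
  rw [Finset.HasAntidiagonal.mem_antidiagonal] at hp
  by_cases h1 : deg p.1 = m
  · have h2 : deg p.2 ≠ n := by
      intro h2
      apply hα
      rw [← hp, deg_add, h1, h2]
    rw [hg _ h2, mul_zero]
  · rw [hf _ h1, zero_mul]

lemma isHomog_one : IsHomog 0 (1 : R2 K) := by
  intro α hα
  rw [coeff_one, if_neg]
  intro h
  apply hα
  rw [h]; rfl

lemma isHomog_C (r : K) : IsHomog 0 (C (σ := Fin 2) (R := K) r) := by
  intro α hα
  rw [coeff_C, if_neg]
  intro h
  apply hα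
  rw [h]; rfl

lemma deg_single_one (i : Fin 2) : deg (Finsupp.single i 1) = 1 := by
  fin_cases i <;> simp [deg, Finsupp.single_apply]

lemma isHomog_X (i : Fin 2) : IsHomog 1 (X i : R2 K) := by
  intro α hα
  rw [coeff_X, if_neg]
  intro h
  apply hα
  rw [h, deg_single_one]

lemma IsHomog.pow {f : R2 K} (hf : IsHomog 1 f) : ∀ k : ℕ, IsHomog k (f ^ k) := by
  intro k
  induction k with
  | zero => rw [pow_zero]; exact isHomog_one
  | succ n ih => rw [pow_succ]; exact ih.mul hf


variable (K)

/-- the image of the monomial `X^β` under the linear substitution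
`X 0 ↦ X 0`, `X 1 ↦ c X 0 + d X 1`. -/
def Mmon (c d : K) (β : Fin 2 →₀ ℕ) : R2 K :=
  X 0 ^ β 0 * (C (σ := Fin 2) (R := K) c * X 0 + C (σ := Fin 2) (R := K) d * X 1) ^ β 1

variable {K}

lemma isHomog_lin (c d : K) :
    IsHomog 1 (C (σ := Fin 2) (R := K) c * X 0 + C (σ := Fin 2) (R := K) d * X 1) := by
  have h0 : IsHomog (0 + 1) (C (σ := Fin 2) (R := K) c * X 0) := (isHomog_C c).mul (isHomog_X 0)
  have h1 : IsHomog (0 + 1) (C (σ := Fin 2) (R := K) d * X 1) := (isHomog_C d).mul (isHomog_X 1)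
  exact h0.add h1

lemma isHomog_Mmon (c d : K) (β : Fin 2 →₀ ℕ) : IsHomog (deg β) (Mmon K c d β) :=
  ((isHomog_X 0).pow (β 0)).mul ((isHomog_lin c d).pow (β 1))

lemma Mmon_add (c d : K) (u v : Fin 2 →₀ ℕ) :
    Mmon K c d (u + v) = Mmon K c d u * Mmon K c d v := by
  simp only [Mmon, Finsupp.add_apply, pow_add]
  ring

variable (K)

/-- The linear substitution `X 0 ↦ X 0`, `X 1 ↦ c X 0 + d X 1` on power series. -/
def Phi (c d : K) (f : R2 K) : R2 K :=
  fun α => ∑ β ∈ Finset.Iic (dN (deg α)),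
    coeff (R := K) β f * coeff (R := K) α (Mmon K c d β)

variable {K}

lemma coeff_Phi (c d : K) (f : R2 K) (α : Fin 2 →₀ ℕ) :
    coeff (R := K) α (Phi K c d f) = ∑ β ∈ Finset.Iic (dN (deg α)),
      coeff (R := K) β f * coeff (R := K) α (Mmon K c d β) := rfl

lemma coeff_Mmon_ne {c d : K} {α β : Fin 2 →₀ ℕ} (h : deg α ≠ deg β) :
    coeff (R := K) α (Mmon K c d β) = 0 := isHomog_Mmon c d β α h

lemma coeff_Phi_superset (c d : K) (f : R2 K) (α : Fin 2 →₀ ℕ)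
    {S : Finset (Fin 2 →₀ ℕ)} (hS : Finset.Iic (dN (deg α)) ⊆ S) :
    coeff (R := K) α (Phi K c d f) = ∑ β ∈ S, coeff (R := K) β f * coeff (R := K) α (Mmon K c d β) := by
  rw [coeff_Phi]
  apply Finset.sum_subset hS
  intro β _ hβ
  rw [coeff_Mmon_ne, mul_zero]
  intro hdeg
  exact hβ (Finset.mem_Iic.mpr (le_dN (le_of_eq hdeg.symm)))

lemma Phi_add (c d : K) (f g : R2 K) :
    Phi K c d (f + g) = Phi K c d f + Phi K c d g := by
  ext α
  rw [map_add, coeff_Phi, coeff_Phi, coeff_Phi, ← Finset.sum_add_distrib]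
  apply Finset.sum_congr rfl
  intro β _
  rw [map_add, add_mul]

lemma Phi_C (c d : K) (r : K) : Phi K c d (C (σ := Fin 2) (R := K) r) = C (σ := Fin 2) (R := K) r := by
  ext α
  rw [coeff_Phi]
  refine (Finset.sum_eq_single_of_mem (0 : Fin 2 →₀ ℕ)
    (Finset.mem_Iic.mpr bot_le) ?_).trans ?_
  · intro β _ hβ
    beta_reduce
    rw [coeff_C, if_neg hβ, zero_mul]
  beta_reduce
  rw [coeff_C, if_pos rfl]
  have : Mmon K c d 0 = 1 := by simp [Mmon]
  rw [this, coeff_one, coeff_C]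
  split_ifs <;> simp

lemma Phi_one (c d : K) : Phi K c d (1 : R2 K) = 1 := by
  have := Phi_C c d (1 : K)
  rwa [map_one] at this

lemma Phi_X (c d : K) (i : Fin 2) :
    Phi K c d (X i) = Mmon K c d (Finsupp.single i 1) := by
  ext α
  rw [coeff_Phi]
  by_cases h : Finsupp.single i 1 ∈ Finset.Iic (dN (deg α))
  · refine (Finset.sum_eq_single_of_mem (Finsupp.single i 1) h ?_).trans ?_
    · intro β _ hβ
      beta_reduce
      rw [coeff_X, if_neg hβ, zero_mul]
    beta_reduce
    rw [coeff_X, if_pos rfl, one_mul]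
  · rw [Finset.sum_eq_zero, coeff_Mmon_ne]
    · rw [deg_single_one]
      intro h1
      exact h (Finset.mem_Iic.mpr (le_dN (by rw [deg_single_one, h1])))
    · intro β hβ
      by_cases hb : β = Finsupp.single i 1
      · exact absurd (hb ▸ hβ) h
      · rw [coeff_X, if_neg hb, zero_mul]


lemma Phi_mul (c d : K) (f g : R2 K) :
    Phi K c d (f * g) = Phi K c d f * Phi K c d g := by
  ext α
  set n := deg α with hn
  set S : Finset (Fin 2 →₀ ℕ) := Finset.Iic (dN n) with hS
  set G : (Fin 2 →₀ ℕ) × (Fin 2 →₀ ℕ) → K := fun p =>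
    coeff (R := K) p.1 f * coeff (R := K) p.2 g * coeff (R := K) α (Mmon K c d (p.1 + p.2)) with hG
  have hR : coeff (R := K) α (Phi K c d f * Phi K c d g)
      = ∑ u ∈ S, ∑ v ∈ S, G (u, v) := by
    rw [coeff_mul]
    have step : ∀ p ∈ Finset.HasAntidiagonal.antidiagonal α,
        coeff (R := K) p.1 (Phi K c d f) * coeff (R := K) p.2 (Phi K c d g)
          = ∑ u ∈ S, ∑ v ∈ S,
              coeff (R := K) u f * coeff (R := K) v g *
                (coeff (R := K) p.1 (Mmon K c d u) * coeff (R := K) p.2 (Mmon K c d v)) := by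
      intro p hp
      have hp' : p.1 + p.2 = α := Finset.HasAntidiagonal.mem_antidiagonal.mp hp
      have h1 : Finset.Iic (dN (deg p.1)) ⊆ S :=
        Finset.Iic_subset_Iic.mpr (dN_mono (by
          rw [hn, ← hp', deg_add]; exact Nat.le_add_right _ _))
      have h2 : Finset.Iic (dN (deg p.2)) ⊆ S :=
        Finset.Iic_subset_Iic.mpr (dN_mono (by
          rw [hn, ← hp', deg_add]; exact Nat.le_add_left _ _))
      rw [coeff_Phi_superset c d f p.1 h1, coeff_Phi_superset c d g p.2 h2,
        Finset.sum_mul_sum]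
      apply Finset.sum_congr rfl; intro u _
      apply Finset.sum_congr rfl; intro v _
      ring
    rw [Finset.sum_congr rfl step, Finset.sum_comm]
    apply Finset.sum_congr rfl; intro u _
    rw [Finset.sum_comm]
    apply Finset.sum_congr rfl; intro v _
    rw [← Finset.mul_sum, ← coeff_mul, ← Mmon_add]
  have hL : coeff (R := K) α (Phi K c d (f * g))
      = ∑ β ∈ S, ∑ p ∈ Finset.HasAntidiagonal.antidiagonal β, G p := by
    rw [coeff_Phi]
    apply Finset.sum_congr rfl; intro β _
    rw [coeff_mul, Finset.sum_mul]
    apply Finset.sum_congr rfl; intro p hp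
    have hp' : p.1 + p.2 = β := Finset.HasAntidiagonal.mem_antidiagonal.mp hp
    rw [hG]; beta_reduce; rw [hp']
  have hdisj : (↑S : Set (Fin 2 →₀ ℕ)).PairwiseDisjoint Finset.HasAntidiagonal.antidiagonal := by
    intro x _ y _ hxy
    apply Finset.disjoint_left.mpr
    intro p hpx hpy
    exact hxy ((Finset.HasAntidiagonal.mem_antidiagonal.mp hpx).symm.trans
      (Finset.HasAntidiagonal.mem_antidiagonal.mp hpy))
  have hBsub : S.biUnion Finset.HasAntidiagonal.antidiagonal ⊆ S ×ˢ S := by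
    intro p hp
    obtain ⟨β, hβ, hpβ⟩ := Finset.mem_biUnion.mp hp
    have hpsum : p.1 + p.2 = β := Finset.HasAntidiagonal.mem_antidiagonal.mp hpβ
    have hβS : β ≤ dN n := Finset.mem_Iic.mp hβ
    rw [Finset.mem_product, Finset.mem_Iic, Finset.mem_Iic]
    constructor
    · exact le_trans (le_trans (self_le_add_right p.1 p.2) (le_of_eq hpsum)) hβS
    · exact le_trans (le_trans (self_le_add_left p.2 p.1) (le_of_eq hpsum)) hβS
  have hvan : ∀ p ∈ S ×ˢ S, p ∉ S.biUnion Finset.HasAntidiagonal.antidiagonal → G p = 0 := by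
    intro p _ hp
    rw [hG]; beta_reduce
    rw [coeff_Mmon_ne, mul_zero]
    intro hdeg
    apply hp
    apply Finset.mem_biUnion.mpr
    exact ⟨p.1 + p.2, Finset.mem_Iic.mpr (le_dN (le_of_eq hdeg.symm)),
      Finset.HasAntidiagonal.mem_antidiagonal.mpr rfl⟩
  rw [hL, hR, ← Finset.sum_biUnion hdisj, Finset.sum_subset hBsub hvan,
    Finset.sum_product]

variable (K)

/-- `Phi` as an algebra homomorphism. -/
def PhiHom (c d : K) : R2 K →ₐ[K] R2 K where
  toFun := Phi K c d
  map_one' := Phi_one c d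
  map_mul' := Phi_mul c d
  map_zero' := by
    have := Phi_C c d (0 : K)
    rwa [map_zero] at this
  map_add' := Phi_add c d
  commutes' := fun r => by
    have h : (algebraMap K (R2 K)) r = C (σ := Fin 2) (R := K) r := rfl
    rw [h]; exact Phi_C c d r

variable {K}


lemma PhiHom_apply (c d : K) (f : R2 K) : PhiHom K c d f = Phi K c d f := rfl

lemma fin2_eta (γ : Fin 2 →₀ ℕ) :
    Finsupp.single (0 : Fin 2) (γ 0) + Finsupp.single 1 (γ 1) = γ := by
  ext i
  fin_cases i <;> simp [Finsupp.single_apply]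

lemma Mmon_single0 (c d : K) :
    Mmon K c d (Finsupp.single 0 1) = X 0 := by
  rw [Mmon]
  rw [show (Finsupp.single (0 : Fin 2) 1) 0 = 1 from Finsupp.single_eq_same]
  rw [show (Finsupp.single (0 : Fin 2) 1) 1 = 0 from
    Finsupp.single_eq_of_ne (by decide)]
  rw [pow_one, pow_zero, mul_one]

lemma Mmon_single1 (c d : K) :
    Mmon K c d (Finsupp.single 1 1)
      = C (σ := Fin 2) (R := K) c * X 0 + C (σ := Fin 2) (R := K) d * X 1 := by
  rw [Mmon]
  rw [show (Finsupp.single (1 : Fin 2) 1) 0 = 0 from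
    Finsupp.single_eq_of_ne (by decide)]
  rw [show (Finsupp.single (1 : Fin 2) 1) 1 = 1 from Finsupp.single_eq_same]
  rw [pow_one, pow_zero, one_mul]

lemma Phi_Mmon (c d c' d' : K) (h1 : c + d * c' = 0) (h2 : d * d' = 1)
    (γ : Fin 2 →₀ ℕ) :
    Phi K c' d' (Mmon K c d γ) = monomial (R := K) γ 1 := by
  have e0 : Phi K c' d' (X 0 : R2 K) = X 0 := by
    rw [Phi_X, Mmon_single0]
  have e1 : Phi K c' d' (C (σ := Fin 2) (R := K) c * X 0 + C (σ := Fin 2) (R := K) d * X 1) = X 1 := by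
    rw [Phi_add, Phi_mul, Phi_mul, Phi_C, Phi_C, e0, Phi_X, Mmon_single1]
    have hc : C (σ := Fin 2) (R := K) c + C (σ := Fin 2) (R := K) d * C (σ := Fin 2) (R := K) c' = 0 := by
      rw [← map_mul, ← map_add, h1, map_zero]
    have hd : C (σ := Fin 2) (R := K) d * C (σ := Fin 2) (R := K) d' = (1 : R2 K) := by
      rw [← map_mul, h2, map_one]
    linear_combination (X 0 : R2 K) * hc + (X 1 : R2 K) * hd
  have : Phi K c' d' (Mmon K c d γ)
      = Phi K c' d' (X 0 : R2 K) ^ γ 0 *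
        Phi K c' d' (C (σ := Fin 2) (R := K) c * X 0 + C (σ := Fin 2) (R := K) d * X 1) ^ γ 1 := by
    rw [Mmon, ← PhiHom_apply, map_mul, map_pow, map_pow, PhiHom_apply, PhiHom_apply]
  rw [this, e0, e1, X_pow_eq, X_pow_eq, monomial_mul_monomial, one_mul, fin2_eta]

lemma Phi_comp (c d c' d' : K) (h1 : c + d * c' = 0) (h2 : d * d' = 1)
    (f : R2 K) : Phi K c' d' (Phi K c d f) = f := by
  ext α
  rw [coeff_Phi]
  set n := deg α with hn
  have hsub : ∀ β ∈ Finset.Iic (dN n),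
      coeff (R := K) β (Phi K c d f) * coeff (R := K) α (Mmon K c' d' β)
        = (∑ γ ∈ Finset.Iic (dN (2 * n)),
            coeff (R := K) γ f * coeff (R := K) β (Mmon K c d γ)) * coeff (R := K) α (Mmon K c' d' β) := by
    intro β hβ
    congr 1
    apply coeff_Phi_superset
    apply Finset.Iic_subset_Iic.mpr
    apply dN_mono
    have hβ' : β ≤ dN n := Finset.mem_Iic.mp hβ
    have hb0 : β 0 ≤ n := le_trans (hβ' 0) (le_of_eq (dN_apply n 0))
    have hb1 : β 1 ≤ n := le_trans (hβ' 1) (le_of_eq (dN_apply n 1))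
    calc deg β = β 0 + β 1 := rfl
    _ ≤ n + n := add_le_add hb0 hb1
    _ = 2 * n := (two_mul n).symm
  rw [Finset.sum_congr rfl hsub]
  simp only [Finset.sum_mul, mul_assoc]
  rw [Finset.sum_comm]
  have hstep : ∀ γ ∈ Finset.Iic (dN (2 * n)),
      (∑ β ∈ Finset.Iic (dN n),
        coeff (R := K) γ f * (coeff (R := K) β (Mmon K c d γ) * coeff (R := K) α (Mmon K c' d' β)))
      = coeff (R := K) γ f * (if α = γ then (1 : K) else 0) := by
    intro γ _
    rw [← Finset.mul_sum]
    congr 1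
    have : (∑ β ∈ Finset.Iic (dN n),
        coeff (R := K) β (Mmon K c d γ) * coeff (R := K) α (Mmon K c' d' β))
        = coeff (R := K) α (Phi K c' d' (Mmon K c d γ)) := (coeff_Phi c' d' _ α).symm
    rw [this, Phi_Mmon c d c' d' h1 h2, coeff_monomial]
  rw [Finset.sum_congr rfl hstep]
  simp only [mul_ite, mul_one, mul_zero]
  rw [Finset.sum_ite_eq, if_pos]
  apply Finset.mem_Iic.mpr
  apply le_dN
  rw [← hn]
  exact Nat.le_mul_of_pos_left n (by norm_num)

variable (K)

/-- The linear substitution as an algebra automorphism (for `d ≠ 0`). -/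
def PhiEquiv (c d : K) (hd : d ≠ 0) : R2 K ≃ₐ[K] R2 K :=
  AlgEquiv.ofAlgHom (PhiHom K c d) (PhiHom K (-c * d⁻¹) d⁻¹)
    (AlgHom.ext fun f => Phi_comp (-c * d⁻¹) d⁻¹ c d (by field_simp; ring) (by field_simp) f)
    (AlgHom.ext fun f => Phi_comp c d (-c * d⁻¹) d⁻¹ (by field_simp; ring) (by field_simp) f)

variable {K}

lemma PhiEquiv_apply (c d : K) (hd : d ≠ 0) (f : R2 K) :
    (PhiEquiv K c d hd).toAlgHom.toRingHom f = Phi K c d f := rfl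


lemma Phi_pow (c d : K) (f : R2 K) (k : ℕ) :
    Phi K c d (f ^ k) = Phi K c d f ^ k :=
  map_pow (PhiHom K c d) f k

end CTAux

open CTAux

/-- In characteristic 2, for `a ≠ 0` with `a·b ≠ 1`, `(x² + a x y, y² + b x y)` is
contact equivalent to `(x y, x² + y²)`. -/
theorem char_two_F22 [IsAlgClosed K] [CharP K 2]
    (a b : K) (ha : a ≠ 0) (hab : a * b ≠ 1) :
    ContactEquiv K
      (X 0 ^ 2 + C (σ := Fin 2) (R := K) a * (X 0 * X 1), X 1 ^ 2 + C (σ := Fin 2) (R := K) b * (X 0 * X 1))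
      (X 0 * X 1, X 0 ^ 2 + X 1 ^ 2) := by
  classical
  have h2K : (2 : K) = 0 := by
    have := CharP.cast_eq_zero K 2
    simpa using this
  have h2R : (2 : R2 K) = 0 := by
    rw [← map_ofNat (C (σ := Fin 2) (R := K)) 2, show ((OfNat.ofNat 2 : K)) = 0 from h2K, map_zero]
  have hinv : a⁻¹ + b ≠ 0 := by
    intro h
    apply hab
    have hb : b = -a⁻¹ := eq_neg_of_add_eq_zero_right h
    rw [hb, CharTwo.neg_eq, mul_inv_cancel₀ ha]
  have he : a⁻¹ * a⁻¹ + b * a⁻¹ ≠ 0 := by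
    have : a⁻¹ * a⁻¹ + b * a⁻¹ = (a⁻¹ + b) * a⁻¹ := by ring
    rw [this]
    exact mul_ne_zero hinv (inv_ne_zero ha)
  obtain ⟨d, hd2⟩ := IsAlgClosed.exists_pow_nat_eq (a⁻¹ * a⁻¹ + b * a⁻¹) (n := 2)
    (by norm_num)
  have hd0 : d ≠ 0 := by
    intro h
    apply he
    rw [← hd2, h]
    ring
  have hu : a * d ≠ 0 := mul_ne_zero ha hd0
  have hw : d * d ≠ 0 := mul_ne_zero hd0 hd0
  -- C-level relations
  have ha1 : C (σ := Fin 2) (R := K) a * C (σ := Fin 2) (R := K) a⁻¹ = 1 := by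
    rw [← map_mul, mul_inv_cancel₀ ha, map_one]
  have had : C (σ := Fin 2) (R := K) a * C (σ := Fin 2) (R := K) d = C (σ := Fin 2) (R := K) (a * d) :=
    (map_mul _ _ _).symm
  have e1 : C (σ := Fin 2) (R := K) a⁻¹ * C (σ := Fin 2) (R := K) a⁻¹ + C (σ := Fin 2) (R := K) b * C (σ := Fin 2) (R := K) a⁻¹
      = C (σ := Fin 2) (R := K) (d * d) := by
    rw [← map_mul, ← map_mul, ← map_add]
    congr 1
    rw [← hd2]; ring
  have e3 : C (σ := Fin 2) (R := K) b * C (σ := Fin 2) (R := K) d = C (σ := Fin 2) (R := K) (b * d) :=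
    (map_mul _ _ _).symm
  have e4 : C (σ := Fin 2) (R := K) d * C (σ := Fin 2) (R := K) d = C (σ := Fin 2) (R := K) (d * d) :=
    (map_mul _ _ _).symm
  refine ⟨PhiEquiv K a⁻¹ d hd0, ?_⟩
  have img1 : Phi K a⁻¹ d (X 0 ^ 2 + C (σ := Fin 2) (R := K) a * (X 0 * X 1))
      = C (σ := Fin 2) (R := K) (a * d) * (X 0 * X 1) := by
    rw [Phi_add, Phi_pow, Phi_mul, Phi_mul, Phi_C, Phi_X, Phi_X,
      Mmon_single0, Mmon_single1]
    linear_combination (X 0 : R2 K) ^ 2 * ha1 + (X 0 * X 1 : R2 K) * had +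
      (X 0 : R2 K) ^ 2 * h2R
  have img2 : Phi K a⁻¹ d (X 1 ^ 2 + C (σ := Fin 2) (R := K) b * (X 0 * X 1))
      = C (σ := Fin 2) (R := K) (d * d) * (X 0 ^ 2 + X 1 ^ 2)
        + C (σ := Fin 2) (R := K) (b * d) * (X 0 * X 1) := by
    rw [Phi_add, Phi_pow, Phi_mul, Phi_mul, Phi_C, Phi_X, Phi_X,
      Mmon_single0, Mmon_single1]
    linear_combination (X 0 : R2 K) ^ 2 * e1 + (X 1 : R2 K) ^ 2 * e4 +
      (X 0 * X 1 : R2 K) * e3 +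
      (C (σ := Fin 2) (R := K) a⁻¹ * C (σ := Fin 2) (R := K) d * (X 0 * X 1) : R2 K) * h2R
  rw [Ideal.map_span, Set.image_pair, PhiEquiv_apply, PhiEquiv_apply, img1, img2]
  -- ideal equality
  apply le_antisymm
  · rw [Ideal.span_le]
    have hP : (X 0 * X 1 : R2 K) ∈ Ideal.span {X 0 * X 1, X 0 ^ 2 + X 1 ^ 2} :=
      Ideal.subset_span (Set.mem_insert _ _)
    have hQ : (X 0 ^ 2 + X 1 ^ 2 : R2 K)
        ∈ Ideal.span {X 0 * X 1, X 0 ^ 2 + X 1 ^ 2} :=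
      Ideal.subset_span (Set.mem_insert_iff.mpr (Or.inr rfl))
    rintro x hx
    simp only [Set.mem_insert_iff, Set.mem_singleton_iff] at hx
    rcases hx with h | h <;> subst h
    · exact Ideal.mul_mem_left _ _ hP
    · exact Ideal.add_mem _ (Ideal.mul_mem_left _ _ hQ) (Ideal.mul_mem_left _ _ hP)
  · rw [Ideal.span_le]
    set I := Ideal.span {C (σ := Fin 2) (R := K) (a * d) * (X 0 * X 1),
      C (σ := Fin 2) (R := K) (d * d) * (X 0 ^ 2 + X 1 ^ 2)
        + C (σ := Fin 2) (R := K) (b * d) * (X 0 * X 1)} with hI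
    have hg1 : C (σ := Fin 2) (R := K) (a * d) * (X 0 * X 1) ∈ I :=
      Ideal.subset_span (Set.mem_insert _ _)
    have hg2 : C (σ := Fin 2) (R := K) (d * d) * (X 0 ^ 2 + X 1 ^ 2)
        + C (σ := Fin 2) (R := K) (b * d) * (X 0 * X 1) ∈ I :=
      Ideal.subset_span (Set.mem_insert_iff.mpr (Or.inr rfl))
    have hP : (X 0 * X 1 : R2 K) ∈ I := by
      have := I.mul_mem_left (C (σ := Fin 2) (R := K) (a * d)⁻¹) hg1
      rwa [← mul_assoc, ← map_mul, inv_mul_cancel₀ hu, map_one, one_mul] at this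
    have hQ : (X 0 ^ 2 + X 1 ^ 2 : R2 K) ∈ I := by
      have h3 : C (σ := Fin 2) (R := K) (d * d) * (X 0 ^ 2 + X 1 ^ 2) ∈ I := by
        have := I.sub_mem hg2 (I.mul_mem_left (C (σ := Fin 2) (R := K) (b * d)) hP)
        rwa [add_sub_cancel_right] at this
      have := I.mul_mem_left (C (σ := Fin 2) (R := K) (d * d)⁻¹) h3
      rwa [← mul_assoc, ← map_mul, inv_mul_cancel₀ hw, map_one, one_mul] at this
    rintro x hx
    simp only [Set.mem_insert_iff, Set.mem_singleton_iff] at hx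
    rcases hx with h | h <;> subst h
    · exact hP
    · exact hQ


end
end

section
/- Let K be an algebraically closed field of characteristic 2 and a ∈ K with a ≠ 1. Then (x² + a y², x y + y²) is contact equivalent to (x², x y + y²) in K[[x,y]]. -/
open MvPowerSeries

noncomputable section

variable (K : Type) [Field K]

/-! ### Linear substitution machinery -/

section Subst

variable {K}

open MvPolynomial

lemma degree_mono {d' d : Fin 2 →₀ ℕ} (h : d' ≤ d) :
    Finsupp.degree d' ≤ Finsupp.degree d := by
  obtain ⟨e, rfl⟩ := le_iff_exists_add.mp h
  have : Finsupp.degree (d' + e) = Finsupp.degree d' + Finsupp.degree e := by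
    simp [Finsupp.degree_eq_weight_one, map_add]
  omega

/-- Bound for truncation. -/
def nbd (d : Fin 2 →₀ ℕ) : Fin 2 →₀ ℕ :=
  Finsupp.single 0 (Finsupp.degree d + 1) + Finsupp.single 1 (Finsupp.degree d + 1)

lemma nbd_apply (d : Fin 2 →₀ ℕ) (i : Fin 2) : nbd d i = Finsupp.degree d + 1 := by
  fin_cases i <;> simp [nbd]

lemma lt_nbd {e d : Fin 2 →₀ ℕ} (h : Finsupp.degree e ≤ Finsupp.degree d) : e < nbd d := by
  have hle : e ≤ nbd d := by
    intro i
    rw [nbd_apply]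
    exact le_trans (le_trans (Finsupp.le_degree i e) h) (Nat.le_succ _)
  refine lt_of_le_of_ne hle fun he => ?_
  have := (Finsupp.le_degree 0 e).trans h
  rw [he, nbd_apply] at this
  omega

lemma coeff_aeval_homComp (σp : Fin 2 → MvPolynomial (Fin 2) K)
    (hσ : ∀ i, (σp i).IsHomogeneous 1) (d : Fin 2 →₀ ℕ) (P : MvPolynomial (Fin 2) K) :
    (MvPolynomial.aeval σp P).coeff d
      = (MvPolynomial.aeval σp (homogeneousComponent (Finsupp.degree d) P)).coeff d := by
  conv_lhs => rw [← sum_homogeneousComponent P]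
  rw [map_sum, MvPolynomial.coeff_sum]
  rw [Finset.sum_eq_single (Finsupp.degree d)]
  · intro k _ hkd
    refine ((homogeneousComponent_isHomogeneous k P).aeval σp hσ).coeff_eq_zero ?_
    simpa using fun h => hkd h.symm
  · intro h
    rw [homogeneousComponent_eq_zero, map_zero, MvPolynomial.coeff_zero]
    rw [Finset.mem_range] at h
    omega

lemma coeff_aeval_congr (σp : Fin 2 → MvPolynomial (Fin 2) K)
    (hσ : ∀ i, (σp i).IsHomogeneous 1) (d : Fin 2 →₀ ℕ) {P Q : MvPolynomial (Fin 2) K}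
    (h : ∀ e : Fin 2 →₀ ℕ, Finsupp.degree e = Finsupp.degree d → P.coeff e = Q.coeff e) :
    (MvPolynomial.aeval σp P).coeff d = (MvPolynomial.aeval σp Q).coeff d := by
  rw [coeff_aeval_homComp σp hσ d P, coeff_aeval_homComp σp hσ d Q]
  have hPQ : homogeneousComponent (Finsupp.degree d) P
      = homogeneousComponent (Finsupp.degree d) Q := by
    ext e
    rw [MvPolynomial.coeff_homogeneousComponent, MvPolynomial.coeff_homogeneousComponent]
    split_ifs with he
    · exact h e he
    · rfl
  rw [hPQ]

/-- Substitution of homogeneous linear forms into a power series. -/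
def Tfun (σp : Fin 2 → MvPolynomial (Fin 2) K) (F : R2 K) : R2 K :=
  fun d => (MvPolynomial.aeval σp (MvPowerSeries.trunc K (nbd d) F)).coeff d

lemma coeff_Tfun (σp : Fin 2 → MvPolynomial (Fin 2) K) (F : R2 K) (d : Fin 2 →₀ ℕ) :
    coeff (R := K) d (Tfun σp F) = (MvPolynomial.aeval σp (MvPowerSeries.trunc K (nbd d) F)).coeff d :=
  rfl

lemma Tfun_eq (σp : Fin 2 → MvPolynomial (Fin 2) K)
    (hσ : ∀ i, (σp i).IsHomogeneous 1) (F : R2 K) (d : Fin 2 →₀ ℕ)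
    {P : MvPolynomial (Fin 2) K}
    (hP : ∀ e : Fin 2 →₀ ℕ, Finsupp.degree e = Finsupp.degree d → P.coeff e = coeff (R := K) e F) :
    coeff (R := K) d (Tfun σp F) = (MvPolynomial.aeval σp P).coeff d := by
  rw [coeff_Tfun]
  refine coeff_aeval_congr σp hσ d fun e he => ?_
  rw [MvPowerSeries.coeff_trunc, if_pos (lt_nbd he.le), hP e he]

/-- The substitution as an algebra homomorphism. -/
def Thom (σp : Fin 2 → MvPolynomial (Fin 2) K)
    (hσ : ∀ i, (σp i).IsHomogeneous 1) : R2 K →ₐ[K] R2 K where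
  toFun := Tfun σp
  map_one' := by
    classical
    refine MvPowerSeries.ext fun d => ?_
    rw [Tfun_eq σp hσ 1 d (P := 1)
      (fun e _ => by simp [MvPolynomial.coeff_one, MvPowerSeries.coeff_one, eq_comm])]
    simp [MvPolynomial.coeff_one, MvPowerSeries.coeff_one, eq_comm]
  map_mul' F G := by
    classical
    refine MvPowerSeries.ext fun d => ?_
    have hF : ∀ d' : Fin 2 →₀ ℕ, d' ≤ d →
        coeff (R := K) d' (Tfun σp F)
          = (MvPolynomial.aeval σp (MvPowerSeries.trunc K (nbd d) F)).coeff d' := by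
      intro d' hd'
      refine Tfun_eq σp hσ F d' fun e he => ?_
      rw [MvPowerSeries.coeff_trunc,
        if_pos (lt_nbd (he.le.trans (degree_mono hd')))]
    have hG : ∀ d' : Fin 2 →₀ ℕ, d' ≤ d →
        coeff (R := K) d' (Tfun σp G)
          = (MvPolynomial.aeval σp (MvPowerSeries.trunc K (nbd d) G)).coeff d' := by
      intro d' hd'
      refine Tfun_eq σp hσ G d' fun e he => ?_
      rw [MvPowerSeries.coeff_trunc,
        if_pos (lt_nbd (he.le.trans (degree_mono hd')))]
    have step1 : coeff (R := K) d (Tfun σp (F * G))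
        = (MvPolynomial.aeval σp
            (MvPowerSeries.trunc K (nbd d) F * MvPowerSeries.trunc K (nbd d) G)).coeff d := by
      refine Tfun_eq σp hσ (F * G) d fun e he => ?_
      rw [MvPolynomial.coeff_mul, MvPowerSeries.coeff_mul]
      refine Finset.sum_congr rfl fun x hx => ?_
      rw [Finset.HasAntidiagonal.mem_antidiagonal] at hx
      have hx1 : x.1 ≤ e := hx ▸ le_self_add
      have hx2 : x.2 ≤ e := hx ▸ le_add_self
      rw [MvPowerSeries.coeff_trunc, MvPowerSeries.coeff_trunc,
        if_pos (lt_of_le_of_lt hx1 (lt_nbd he.le)),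
        if_pos (lt_of_le_of_lt hx2 (lt_nbd he.le))]
    rw [step1, map_mul, MvPolynomial.coeff_mul, MvPowerSeries.coeff_mul]
    refine Finset.sum_congr rfl fun x hx => ?_
    rw [Finset.HasAntidiagonal.mem_antidiagonal] at hx
    have hx1 : x.1 ≤ d := hx ▸ le_self_add
    have hx2 : x.2 ≤ d := hx ▸ le_add_self
    rw [hF x.1 hx1, hG x.2 hx2]
  map_zero' := by
    refine MvPowerSeries.ext fun d => ?_
    rw [Tfun_eq σp hσ 0 d (P := 0) (fun e _ => by simp)]
    simp
  map_add' F G := by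
    refine MvPowerSeries.ext fun d => ?_
    rw [Tfun_eq σp hσ (F + G) d
      (P := MvPowerSeries.trunc K (nbd d) F + MvPowerSeries.trunc K (nbd d) G)
      (fun e he => by
        rw [MvPolynomial.coeff_add, MvPowerSeries.coeff_trunc,
          MvPowerSeries.coeff_trunc, if_pos (lt_nbd he.le), if_pos (lt_nbd he.le),
          map_add])]
    rw [map_add, MvPolynomial.coeff_add, map_add]
    rw [coeff_Tfun, coeff_Tfun]
  commutes' r := by
    classical
    show Tfun σp (algebraMap K (R2 K) r) = algebraMap K (R2 K) r
    rw [← MvPowerSeries.c_eq_algebraMap]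
    refine MvPowerSeries.ext fun d => ?_
    rw [Tfun_eq σp hσ _ d (P := MvPolynomial.C r)
      (fun e _ => by simp [MvPolynomial.coeff_C, MvPowerSeries.coeff_C, eq_comm])]
    rw [aeval_C]
    simp [MvPolynomial.algebraMap_eq, MvPolynomial.coeff_C, MvPowerSeries.coeff_C, eq_comm]

lemma Thom_X (σp : Fin 2 → MvPolynomial (Fin 2) K)
    (hσ : ∀ i, (σp i).IsHomogeneous 1) (i : Fin 2) :
    Thom σp hσ (X i) = ((σp i : MvPolynomial (Fin 2) K) : R2 K) := by
  classical
  refine MvPowerSeries.ext fun d => ?_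
  have : coeff (R := K) d (Tfun σp (X i))
      = (MvPolynomial.aeval σp (MvPolynomial.X i : MvPolynomial (Fin 2) K)).coeff d := by
    refine Tfun_eq σp hσ _ d fun e _ => ?_
    rw [MvPolynomial.coeff_X', MvPowerSeries.coeff_X]
    simp [eq_comm]
  show coeff (R := K) d (Tfun σp (X i)) = _
  rw [this, aeval_X, MvPolynomial.coeff_coe]

lemma Tfun_comp (σp τp : Fin 2 → MvPolynomial (Fin 2) K)
    (hσ : ∀ i, (σp i).IsHomogeneous 1) (hτ : ∀ i, (τp i).IsHomogeneous 1) (F : R2 K) :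
    Tfun σp (Tfun τp F) = Tfun (fun i => MvPolynomial.aeval σp (τp i)) F := by
  classical
  have hcomp : ∀ i, (MvPolynomial.aeval σp (τp i)).IsHomogeneous 1 := by
    intro i
    simpa using (hτ i).aeval σp hσ
  refine MvPowerSeries.ext fun d => ?_
  have step1 : coeff (R := K) d (Tfun σp (Tfun τp F))
      = (MvPolynomial.aeval σp
          (MvPolynomial.aeval τp (MvPowerSeries.trunc K (nbd d) F))).coeff d := by
    rw [coeff_Tfun]
    refine coeff_aeval_congr σp hσ d fun e he => ?_
    rw [MvPowerSeries.coeff_trunc, if_pos (lt_nbd he.le)]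
    refine Tfun_eq τp hτ F e fun e' he' => ?_
    rw [MvPowerSeries.coeff_trunc, if_pos (lt_nbd (by rw [he', he]))]
  have step2 : MvPolynomial.aeval σp (MvPolynomial.aeval τp (MvPowerSeries.trunc K (nbd d) F))
      = MvPolynomial.aeval (fun i => MvPolynomial.aeval σp (τp i))
          (MvPowerSeries.trunc K (nbd d) F) := by
    have : (MvPolynomial.aeval σp).comp (MvPolynomial.aeval τp)
        = MvPolynomial.aeval (R := K) (fun i => MvPolynomial.aeval σp (τp i)) := by
      apply MvPolynomial.algHom_ext
      intro i
      simp
    exact AlgHom.congr_fun this _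
  rw [step1, step2]
  exact (Tfun_eq _ hcomp F d (fun e he =>
    by rw [MvPowerSeries.coeff_trunc, if_pos (lt_nbd he.le)])).symm

lemma Tfun_X_left (F : R2 K) : Tfun (MvPolynomial.X : Fin 2 → MvPolynomial (Fin 2) K) F = F := by
  refine MvPowerSeries.ext fun d => ?_
  rw [coeff_Tfun, aeval_X_left_apply, MvPowerSeries.coeff_trunc,
    if_pos (lt_nbd le_rfl)]

/-- The substitution as an algebra equivalence, given a two-sided inverse. -/
def Tequiv (σp τp : Fin 2 → MvPolynomial (Fin 2) K)
    (hσ : ∀ i, (σp i).IsHomogeneous 1) (hτ : ∀ i, (τp i).IsHomogeneous 1)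
    (hστ : ∀ i, MvPolynomial.aeval σp (τp i) = MvPolynomial.X i)
    (hτσ : ∀ i, MvPolynomial.aeval τp (σp i) = MvPolynomial.X i) :
    R2 K ≃ₐ[K] R2 K :=
  AlgEquiv.ofAlgHom (Thom σp hσ) (Thom τp hτ)
    (AlgHom.ext fun F => by
      show Tfun σp (Tfun τp F) = F
      rw [Tfun_comp σp τp hσ hτ F, show (fun i => MvPolynomial.aeval σp (τp i))
        = (MvPolynomial.X : Fin 2 → MvPolynomial (Fin 2) K) from funext hστ, Tfun_X_left])
    (AlgHom.ext fun F => by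
      show Tfun τp (Tfun σp F) = F
      rw [Tfun_comp τp σp hτ hσ F, show (fun i => MvPolynomial.aeval τp (σp i))
        = (MvPolynomial.X : Fin 2 → MvPolynomial (Fin 2) K) from funext hτσ, Tfun_X_left])

end Subst

set_option maxHeartbeats 1000000 in
/-- In characteristic 2, for `a ≠ 1`, `(x² + a y², x y + y²)` is contact equivalent
to `(x², x y + y²)`. -/
theorem char_two_F221 [IsAlgClosed K] [CharP K 2]
    (a : K) (ha : a ≠ 1) :
    ContactEquiv K
      (X 0 ^ 2 + C (σ := Fin 2) (R := K) a * X 1 ^ 2, X 0 * X 1 + X 1 ^ 2)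
      (X 0 ^ 2, X 0 * X 1 + X 1 ^ 2) := by
  classical
  obtain ⟨c, hc⟩ := IsAlgClosed.exists_pow_nat_eq a (n := 2) (by norm_num)
  set u : K := 1 + c with hu_def
  have hu : u ≠ 0 := by
    intro h
    apply ha
    have hc1 : c = -1 := by linear_combination h - hu_def
    rw [← hc, hc1]
    ring
  -- the substitution and its inverse
  set σp : Fin 2 → MvPolynomial (Fin 2) K :=
    ![MvPolynomial.C u * MvPolynomial.X 0 + MvPolynomial.C c * MvPolynomial.X 1,
      MvPolynomial.X 1] with hσp_def
  set τp : Fin 2 → MvPolynomial (Fin 2) K :=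
    ![MvPolynomial.C u⁻¹ * MvPolynomial.X 0 + MvPolynomial.C (c * u⁻¹) * MvPolynomial.X 1,
      MvPolynomial.X 1] with hτp_def
  have hσ : ∀ i, (σp i).IsHomogeneous 1 := by
    intro i
    fin_cases i
    · exact (MvPolynomial.isHomogeneous_C_mul_X u 0).add (MvPolynomial.isHomogeneous_C_mul_X c 1)
    · exact MvPolynomial.isHomogeneous_X K 1
  have hτ : ∀ i, (τp i).IsHomogeneous 1 := by
    intro i
    fin_cases i
    · exact (MvPolynomial.isHomogeneous_C_mul_X u⁻¹ 0).add
        (MvPolynomial.isHomogeneous_C_mul_X (c * u⁻¹) 1)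
    · exact MvPolynomial.isHomogeneous_X K 1
  have htwoK : (2 : K) = 0 := by
    have := CharP.cast_eq_zero K 2
    simpa using this
  have s0 : σp 0 = MvPolynomial.C u * MvPolynomial.X 0 + MvPolynomial.C c * MvPolynomial.X 1 :=
    rfl
  have s1 : σp 1 = MvPolynomial.X 1 := rfl
  have t0 : τp 0 = MvPolynomial.C u⁻¹ * MvPolynomial.X 0
      + MvPolynomial.C (c * u⁻¹) * MvPolynomial.X 1 := rfl
  have t1 : τp 1 = MvPolynomial.X 1 := rfl
  have hστ : ∀ i, MvPolynomial.aeval σp (τp i) = MvPolynomial.X i := by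
    have h1 : (MvPolynomial.C u⁻¹ : MvPolynomial (Fin 2) K) * MvPolynomial.C u = 1 := by
      rw [← MvPolynomial.C_mul, inv_mul_cancel₀ hu, MvPolynomial.C_1]
    have h2 : (MvPolynomial.C (c * u⁻¹) : MvPolynomial (Fin 2) K)
        + MvPolynomial.C u⁻¹ * MvPolynomial.C c = 0 := by
      rw [← MvPolynomial.C_mul, ← MvPolynomial.C_add, show c * u⁻¹ + u⁻¹ * c = 2 * (c * u⁻¹)
        by ring, htwoK, zero_mul, MvPolynomial.C_0]
    rw [Fin.forall_fin_two]
    constructor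
    · rw [t0, map_add, map_mul, map_mul, MvPolynomial.aeval_C, MvPolynomial.aeval_C,
        MvPolynomial.aeval_X, MvPolynomial.aeval_X, s0, s1, MvPolynomial.algebraMap_eq]
      linear_combination (MvPolynomial.X 0 : MvPolynomial (Fin 2) K) * h1
        + (MvPolynomial.X 1 : MvPolynomial (Fin 2) K) * h2
    · rw [t1, MvPolynomial.aeval_X, s1]
  have hτσ : ∀ i, MvPolynomial.aeval τp (σp i) = MvPolynomial.X i := by
    have h1 : (MvPolynomial.C u : MvPolynomial (Fin 2) K) * MvPolynomial.C u⁻¹ = 1 := by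
      rw [← MvPolynomial.C_mul, mul_inv_cancel₀ hu, MvPolynomial.C_1]
    have h2 : (MvPolynomial.C u : MvPolynomial (Fin 2) K) * MvPolynomial.C (c * u⁻¹)
        + MvPolynomial.C c = 0 := by
      rw [← MvPolynomial.C_mul, ← MvPolynomial.C_add,
        show u * (c * u⁻¹) + c = c * (u * u⁻¹) + c by ring, mul_inv_cancel₀ hu,
        mul_one, show c + c = 2 * c by ring, htwoK, zero_mul, MvPolynomial.C_0]
    rw [Fin.forall_fin_two]
    constructor
    · rw [s0, map_add, map_mul, map_mul, MvPolynomial.aeval_C, MvPolynomial.aeval_C,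
        MvPolynomial.aeval_X, MvPolynomial.aeval_X, t0, t1, MvPolynomial.algebraMap_eq]
      linear_combination (MvPolynomial.X 0 : MvPolynomial (Fin 2) K) * h1
        + (MvPolynomial.X 1 : MvPolynomial (Fin 2) K) * h2
    · rw [s1, MvPolynomial.aeval_X, t1]
  set φ : R2 K ≃ₐ[K] R2 K := Tequiv σp τp hσ hτ hστ hτσ with hφ_def
  refine ⟨φ, ?_⟩
  -- images of the variables
  have hφX0 : φ (X 0) = C (σ := Fin 2) (R := K) u * X 0 + C (σ := Fin 2) (R := K) c * X 1 := by
    show Thom σp hσ (X 0) = _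
    rw [Thom_X]
    show ((σp 0 : MvPolynomial (Fin 2) K) : R2 K) = _
    rw [show σp 0 = MvPolynomial.C u * MvPolynomial.X 0 + MvPolynomial.C c * MvPolynomial.X 1
      from rfl]
    push_cast
    rfl
  have hφX1 : φ (X 1) = X 1 := by
    show Thom σp hσ (X 1) = _
    rw [Thom_X]
    show ((σp 1 : MvPolynomial (Fin 2) K) : R2 K) = _
    rw [show σp 1 = MvPolynomial.X 1 from rfl]
    push_cast
    rfl
  have hφC : φ (C (σ := Fin 2) (R := K) a) = C (σ := Fin 2) (R := K) a := by
    have := φ.commutes a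
    rwa [MvPowerSeries.algebraMap_apply, Algebra.algebraMap_self, RingHom.id_apply] at this
  have htwoR : (2 : R2 K) = 0 := by
    have h1 : ((2 : ℕ) : R2 K) = C (σ := Fin 2) (R := K) ((2 : ℕ) : K) := (map_natCast (C (σ := Fin 2) (R := K)) 2).symm
    have h2 : ((2 : ℕ) : K) = 0 := CharP.cast_eq_zero K 2
    rw [show (2 : R2 K) = ((2 : ℕ) : R2 K) by norm_cast, h1, h2, map_zero]
  have hCa : (C (σ := Fin 2) (R := K) c) ^ 2 = C (σ := Fin 2) (R := K) a := by
    rw [← map_pow, hc]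
  have hCu : C (σ := Fin 2) (R := K) u = 1 + C (σ := Fin 2) (R := K) c := by
    rw [hu_def, map_add, map_one]
  -- images of the two generators
  have e1 : φ (X 0 ^ 2 + C (σ := Fin 2) (R := K) a * X 1 ^ 2) = C (σ := Fin 2) (R := K) (u ^ 2) * X 0 ^ 2 := by
    rw [map_add, map_mul, map_pow, map_pow, hφX0, hφX1, hφC, map_pow]
    linear_combination (C (σ := Fin 2) (R := K) u * C (σ := Fin 2) (R := K) c * (X 0 * X 1)
      + C (σ := Fin 2) (R := K) a * X 1 ^ 2) * htwoR + (X 1 ^ 2 : R2 K) * hCa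
  have e2 : φ (X 0 * X 1 + X 1 ^ 2) = C (σ := Fin 2) (R := K) u * (X 0 * X 1 + X 1 ^ 2) := by
    rw [map_add, map_mul, map_pow, hφX0, hφX1]
    linear_combination (X 1 ^ 2 : R2 K) * hCu.symm
  -- ideal computation
  have himg : Ideal.map φ.toAlgHom.toRingHom
      (Ideal.span {X 0 ^ 2 + C (σ := Fin 2) (R := K) a * X 1 ^ 2, X 0 * X 1 + X 1 ^ 2})
      = Ideal.span {C (σ := Fin 2) (R := K) (u ^ 2) * X 0 ^ 2,
          C (σ := Fin 2) (R := K) u * (X 0 * X 1 + X 1 ^ 2)} := by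
    have e1' : φ.toAlgHom.toRingHom (X 0 ^ 2 + C (σ := Fin 2) (R := K) a * X 1 ^ 2)
        = C (σ := Fin 2) (R := K) (u ^ 2) * X 0 ^ 2 := e1
    have e2' : φ.toAlgHom.toRingHom (X 0 * X 1 + X 1 ^ 2)
        = C (σ := Fin 2) (R := K) u * (X 0 * X 1 + X 1 ^ 2) := e2
    rw [Ideal.map_span, Set.image_insert_eq, Set.image_singleton, e1', e2']
  rw [himg]
  apply le_antisymm
  · rw [Ideal.span_le]
    rintro p hp
    simp only [Set.mem_insert_iff, Set.mem_singleton_iff] at hp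
    rcases hp with rfl | rfl
    · exact Ideal.mul_mem_left _ _ (Ideal.subset_span (Set.mem_insert _ _))
    · exact Ideal.mul_mem_left _ _ (Ideal.subset_span (Set.mem_insert_of_mem _ rfl))
  · rw [Ideal.span_le]
    rintro p hp
    simp only [Set.mem_insert_iff, Set.mem_singleton_iff] at hp
    rcases hp with rfl | rfl
    · have hmem := Ideal.mul_mem_left
        (Ideal.span {C (σ := Fin 2) (R := K) (u ^ 2) * X 0 ^ 2, C (σ := Fin 2) (R := K) u * (X 0 * X 1 + X 1 ^ 2)})
        (C (σ := Fin 2) (R := K) (u ^ 2)⁻¹) (Ideal.subset_span (Set.mem_insert _ _))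
      rwa [← mul_assoc, ← map_mul, inv_mul_cancel₀ (pow_ne_zero 2 hu), map_one, one_mul]
        at hmem
    · have hmem := Ideal.mul_mem_left
        (Ideal.span {C (σ := Fin 2) (R := K) (u ^ 2) * X 0 ^ 2, C (σ := Fin 2) (R := K) u * (X 0 * X 1 + X 1 ^ 2)})
        (C (σ := Fin 2) (R := K) u⁻¹) (Ideal.subset_span (Set.mem_insert_of_mem _ rfl))
      rwa [← mul_assoc, ← map_mul, inv_mul_cancel₀ hu, map_one, one_mul] at hmem

end
end

section
/- Let K be a field of characteristic p with p ∤ m (or p ∤ n), and m, n ≥ 2. Then the Tjurina module T¹(f) of f = (xy, x^m + y^n) restricted to the maximal-ideal part, T^{1,sec}(f) = 𝔪R²/(⟨f₁,f₂⟩R² + 𝔪⟨∂f/∂x, ∂f/∂y⟩), has K-dimension m + n, with basis represented by (x,0), (y,0), (0,x), …, (0,x^{m-1}), (0,y), …, (0,y^{n-1}). -/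
open MvPowerSeries

noncomputable section

namespace TjAux

open Finsupp

variable {K : Type} [Field K]

lemma fs_apply0 (a b : ℕ) : (single (0:Fin 2) a + single (1:Fin 2) b) 0 = a := by
  simp [Finsupp.single_apply]

lemma fs_apply1 (a b : ℕ) : (single (0:Fin 2) a + single (1:Fin 2) b) 1 = b := by
  simp [Finsupp.single_apply]

lemma fs_eq_single0 (d : Fin 2 →₀ ℕ) (h : d 1 = 0) : d = single 0 (d 0) := by
  ext i; fin_cases i <;> simp [h, Finsupp.single_apply]

lemma fs_eq_single1 (d : Fin 2 →₀ ℕ) (h : d 0 = 0) : d = single 1 (d 1) := by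
  ext i; fin_cases i <;> simp [h, Finsupp.single_apply]

def filt (P : (Fin 2 →₀ ℕ) → Prop) [DecidablePred P] (φ : MvPowerSeries (Fin 2) K) :
    MvPowerSeries (Fin 2) K :=
  fun d => if P d then φ d else 0

lemma coeff_filt (P : (Fin 2 →₀ ℕ) → Prop) [DecidablePred P] (φ : MvPowerSeries (Fin 2) K)
    (d : Fin 2 →₀ ℕ) : coeff d (filt P φ) = if P d then coeff d φ else 0 := rfl

lemma divA (φ : MvPowerSeries (Fin 2) K) (h0 : coeff 0 φ = 0) :
    ∃ u v : MvPowerSeries (Fin 2) K, φ = X 0 * u + X 1 * v := by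
  classical
  set φ₁ : MvPowerSeries (Fin 2) K := filt (fun d => 1 ≤ d 0) φ with hφ₁
  have h1 : (X 0 : MvPowerSeries (Fin 2) K) ∣ φ₁ := by
    rw [X_dvd_iff]
    intro d hd
    rw [hφ₁, coeff_filt, if_neg (by omega)]
  have h2 : (X 1 : MvPowerSeries (Fin 2) K) ∣ (φ - φ₁) := by
    rw [X_dvd_iff]
    intro d hd
    rw [map_sub, hφ₁, coeff_filt]
    by_cases hc : 1 ≤ d 0
    · rw [if_pos hc]; exact sub_self _
    · rw [if_neg hc]
      have : d = 0 := by
        ext i; fin_cases i <;> simp <;> omega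
      rw [this, h0, sub_zero]
  obtain ⟨u, hu⟩ := h1
  obtain ⟨v, hv⟩ := h2
  exact ⟨u, v, by rw [← hu, ← hv]; ring⟩

lemma divXY (φ : MvPowerSeries (Fin 2) K)
    (h : ∀ d : Fin 2 →₀ ℕ, d 0 = 0 ∨ d 1 = 0 → coeff d φ = 0) :
    ∃ w, φ = X 0 * X 1 * w := by
  have h1 : (X 0 : MvPowerSeries (Fin 2) K) ∣ φ := by
    rw [X_dvd_iff]; exact fun d hd => h d (Or.inl hd)
  obtain ⟨w, hw⟩ := h1
  have h2 : (X 1 : MvPowerSeries (Fin 2) K) ∣ w := by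
    rw [X_dvd_iff]
    intro d hd
    have := h (single 0 1 + d) (Or.inr (by simp [Finsupp.single_apply, hd]))
    rw [hw, X_def, coeff_add_monomial_mul, one_mul] at this
    exact this
  obtain ⟨v, hv⟩ := h2
  exact ⟨v, by rw [hw, hv]; ring⟩

lemma coeff_single_C_mul_pow (s : Fin 2) (j j' : ℕ) (γ : K) :
    coeff (single s j) (C γ * X s ^ j') = if j = j' then γ else 0 := by
  rw [coeff_C_mul, coeff_X_pow]
  by_cases h : j = j'
  · simp [h]
  · rw [if_neg, if_neg h, mul_zero]
    intro hc
    have := congrArg (fun f => f s) hc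
    simp at this
    exact h this

lemma coeff_single_C_mul_pow' (s s' : Fin 2) (hss : s ≠ s') (j k : ℕ) (hk : k ≠ 0) (γ : K) :
    coeff (single s j) (C γ * X s' ^ k) = 0 := by
  rw [coeff_C_mul, coeff_X_pow, if_neg, mul_zero]
  intro hc
  have := congrArg (fun f => f s') hc
  simp [Finsupp.single_apply, hss] at this
  exact hk this.symm

lemma coeff_single_pow (s : Fin 2) (j j' : ℕ) :
    coeff (single s j) ((X s : MvPowerSeries (Fin 2) K) ^ j') = if j = j' then 1 else 0 := by
  have := coeff_single_C_mul_pow (K := K) s j j' 1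
  rwa [map_one, one_mul] at this

lemma coeff_single_pow' (s s' : Fin 2) (hss : s ≠ s') (j k : ℕ) (hk : k ≠ 0) :
    coeff (single s j) ((X s' : MvPowerSeries (Fin 2) K) ^ k) = 0 := by
  have := coeff_single_C_mul_pow' (K := K) s s' hss j k hk 1
  rwa [map_one, one_mul] at this

lemma decompA (r : MvPowerSeries (Fin 2) K) :
    ∃ u v : MvPowerSeries (Fin 2) K,
      r * X 0 = C (coeff 0 r) * X 0 + u * X 0 ^ 2 + v * (X 0 * X 1) := by
  obtain ⟨u, v, huv⟩ := divA (r - C (coeff 0 r)) (by simp [coeff_C])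
  exact ⟨u, v, by linear_combination (X 0 : MvPowerSeries (Fin 2) K) * huv⟩

lemma decompA' (r : MvPowerSeries (Fin 2) K) :
    ∃ u v : MvPowerSeries (Fin 2) K,
      r * X 1 = C (coeff 0 r) * X 1 + u * (X 0 * X 1) + v * X 1 ^ 2 := by
  obtain ⟨u, v, huv⟩ := divA (r - C (coeff 0 r)) (by simp [coeff_C])
  exact ⟨u, v, by linear_combination (X 1 : MvPowerSeries (Fin 2) K) * huv⟩

lemma decompB (m n : ℕ) (hm : 2 ≤ m) (hn : 2 ≤ n) (t : MvPowerSeries (Fin 2) K)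
    (h0 : coeff 0 t = 0) :
    ∃ u v w : MvPowerSeries (Fin 2) K,
      t = (∑ j ∈ Finset.Ico 1 m, C (coeff (single 0 j) t) * X 0 ^ j)
        + (∑ k ∈ Finset.Ico 1 n, C (coeff (single 1 k) t) * X 1 ^ k)
        + u * (X 0 * X 1) + v * X 0 ^ m + w * X 1 ^ n := by
  classical
  set S1 : MvPowerSeries (Fin 2) K :=
    ∑ j ∈ Finset.Ico 1 m, C (coeff (single 0 j) t) * X 0 ^ j with hS1
  set S2 : MvPowerSeries (Fin 2) K :=
    ∑ k ∈ Finset.Ico 1 n, C (coeff (single 1 k) t) * X 1 ^ k with hS2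
  set t' : MvPowerSeries (Fin 2) K := t - S1 - S2 with ht'
  have hcS1 : ∀ j : ℕ, coeff (single (0:Fin 2) j) S1 =
      if j ∈ Finset.Ico 1 m then coeff (single (0:Fin 2) j) t else 0 := by
    intro j
    rw [hS1, map_sum]
    rw [Finset.sum_congr rfl (fun j' _ => coeff_single_C_mul_pow 0 j j' _)]
    exact Finset.sum_ite_eq _ j _
  have hcS2 : ∀ k : ℕ, coeff (single (1:Fin 2) k) S2 =
      if k ∈ Finset.Ico 1 n then coeff (single (1:Fin 2) k) t else 0 := by
    intro k
    rw [hS2, map_sum]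
    rw [Finset.sum_congr rfl (fun k' _ => coeff_single_C_mul_pow 1 k k' _)]
    exact Finset.sum_ite_eq _ k _
  have hcS1' : ∀ k : ℕ, coeff (single (1:Fin 2) k) S1 = 0 := by
    intro k
    rw [hS1, map_sum, Finset.sum_eq_zero]
    intro j' hj'
    exact coeff_single_C_mul_pow' 1 0 (by decide) k j' (by simp at hj'; omega) _
  have hcS2' : ∀ j : ℕ, coeff (single (0:Fin 2) j) S2 = 0 := by
    intro j
    rw [hS2, map_sum, Finset.sum_eq_zero]
    intro k' hk'
    exact coeff_single_C_mul_pow' 0 1 (by decide) j k' (by simp at hk'; omega) _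
  have hx : ∀ j, j < m → coeff (single (0:Fin 2) j) t' = 0 := by
    intro j hj
    rw [ht', map_sub, map_sub, hcS1 j, hcS2' j, sub_zero]
    by_cases h1 : 1 ≤ j
    · rw [if_pos (by simp; omega), sub_self]
    · have hj0 : j = 0 := by omega
      rw [if_neg (by simp; omega), sub_zero, hj0, single_zero, h0]
  have hy : ∀ k, k < n → coeff (single (1:Fin 2) k) t' = 0 := by
    intro k hk
    by_cases h1 : 1 ≤ k
    · rw [ht', map_sub, map_sub, hcS1' k, sub_zero, hcS2 k, if_pos (by simp; omega), sub_self]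
    · have hk0 : k = 0 := by omega
      subst hk0
      have := hx 0 (by omega)
      rwa [single_zero] at this ⊢
  set ub : MvPowerSeries (Fin 2) K := filt (fun d => d 1 = 0) t' with hub
  set uc : MvPowerSeries (Fin 2) K := filt (fun d => d 0 = 0 ∧ d 1 ≠ 0) t' with huc
  have hb : (X 0 : MvPowerSeries (Fin 2) K) ^ m ∣ ub := by
    rw [X_pow_dvd_iff]
    intro d hd
    rw [hub, coeff_filt]
    split_ifs with h1
    · have := hx (d 0) hd
      rwa [← fs_eq_single0 d h1] at this
    · rfl
  have hc : (X 1 : MvPowerSeries (Fin 2) K) ^ n ∣ uc := by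
    rw [X_pow_dvd_iff]
    intro d hd
    rw [huc, coeff_filt]
    split_ifs with h1
    · have := hy (d 1) hd
      rwa [← fs_eq_single1 d h1.1] at this
    · rfl
  have ha : ∃ w, t' - ub - uc = X 0 * X 1 * w := by
    apply divXY
    intro d hd
    rw [map_sub, map_sub, hub, huc, coeff_filt, coeff_filt]
    rcases hd with hd | hd
    · by_cases h1 : d 1 = 0
      · rw [if_pos h1, if_neg (by tauto)]; ring
      · rw [if_neg h1, if_pos ⟨hd, h1⟩]; ring
    · rw [if_pos hd, if_neg (by tauto)]; ring
  obtain ⟨wa, hwa⟩ := ha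
  obtain ⟨vb, hvb⟩ := hb
  obtain ⟨wc, hwc⟩ := hc
  refine ⟨wa, vb, wc, ?_⟩
  have hts : t' = t - S1 - S2 := ht'
  linear_combination hts.symm + hwa + hvb + hwc

def idealOf (P : (Fin 2 →₀ ℕ) → Prop)
    (hP : ∀ e d : Fin 2 →₀ ℕ, e ≤ d → P d → P e) : Ideal (MvPowerSeries (Fin 2) K) where
  carrier := {φ | ∀ d, P d → coeff d φ = 0}
  zero_mem' := fun d _ => map_zero _
  add_mem' := by
    intro a b ha hb d hd
    rw [map_add, ha d hd, hb d hd, add_zero]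
  smul_mem' := by
    intro r φ hφ d hd
    rw [smul_eq_mul, coeff_mul]
    apply Finset.sum_eq_zero
    rintro ⟨i, j⟩ hij
    rw [Finset.HasAntidiagonal.mem_antidiagonal] at hij
    have hj : j ≤ d := hij ▸ le_add_self
    rw [hφ j (hP j d hj hd), mul_zero]

lemma mem_idealOf {P : (Fin 2 →₀ ℕ) → Prop}
    {hP : ∀ e d : Fin 2 →₀ ℕ, e ≤ d → P d → P e} {φ : MvPowerSeries (Fin 2) K} :
    φ ∈ idealOf P hP ↔ ∀ d, P d → coeff d φ = 0 := Iff.rfl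

lemma pow_mem_idealOf {P : (Fin 2 →₀ ℕ) → Prop}
    {hP : ∀ e d : Fin 2 →₀ ℕ, e ≤ d → P d → P e} (s : Fin 2) (a : ℕ)
    (h : ¬ P (single s a)) : (X s : MvPowerSeries (Fin 2) K) ^ a ∈ idealOf P hP := by
  intro d hd
  rw [coeff_X_pow, if_neg]
  rintro rfl
  exact h hd

lemma pow_mul_pow_mem_idealOf {P : (Fin 2 →₀ ℕ) → Prop}
    {hP : ∀ e d : Fin 2 →₀ ℕ, e ≤ d → P d → P e} (a b : ℕ)
    (h : ¬ P (single 0 a + single 1 b)) :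
    (X 0 : MvPowerSeries (Fin 2) K) ^ a * X 1 ^ b ∈ idealOf P hP := by
  intro d hd
  rw [X_pow_eq, X_pow_eq, monomial_mul_monomial, one_mul, coeff_monomial, if_neg]
  rintro rfl
  exact h hd

lemma sum_smul_pair (s : Finset ℕ) (α : ℕ → K) (φ : ℕ → MvPowerSeries (Fin 2) K) :
    ∑ j ∈ s, α j • ((0 : MvPowerSeries (Fin 2) K), φ j)
      = ((0 : MvPowerSeries (Fin 2) K), ∑ j ∈ s, α j • φ j) := by
  refine Prod.ext_iff.mpr ⟨?_, ?_⟩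
  · rw [Prod.fst_sum]
    simp
  · rw [Prod.snd_sum]
    simp

end TjAux

open Finsupp TjAux

set_option maxHeartbeats 2000000 in
/-- For `f = (xy, x^m + y^n)` with `m, n ≥ 2` and `char K ∤ m`, the module
`T^{1,sec}(f) = 𝔪R²/(⟨f₁,f₂⟩R² + 𝔪⟨∂f/∂x, ∂f/∂y⟩)` has `K`-dimension `m + n`,
with basis represented by `(x,0), (y,0), (0,x), …, (0,x^{m-1}), (0,y), …, (0,y^{n-1})`.
Here `N` is the submodule `⟨f₁,f₂⟩R² + 𝔪⟨∂f/∂x, ∂f/∂y⟩`, `M = 𝔪R²`, and the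
statement is expressed via the projection `π` onto `(R×R)/N`: the images of the listed
elements are linearly independent over `K` and span the image of `M`. -/
theorem tjurina_sec_basis (K : Type) [Field K] {p : ℕ} [CharP K p]
    (m n : ℕ) (hm : 2 ≤ m) (hn : 2 ≤ n) (hpm : ¬ (p ∣ m)) :
    let R := MvPowerSeries (Fin 2) K
    let x : R := X 0
    let y : R := X 1
    let f₁ : R := x * y
    let f₂ : R := x ^ m + y ^ n
    let N : Submodule R (R × R) := Submodule.span R
      {(f₁, 0), (0, f₁), (f₂, 0), (0, f₂),
        (x * y, (m : R) * x ^ m), (y ^ 2, (m : R) * x ^ (m - 1) * y),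
        (x ^ 2, (n : R) * x * y ^ (n - 1)), (x * y, (n : R) * y ^ n)}
    let M : Submodule R (R × R) := Submodule.span R {(x, 0), (y, 0), (0, x), (0, y)}
    let π := (N.restrictScalars K).mkQ
    let g : Fin (m + n) → R × R := fun i =>
      if i.val = 0 then (x, 0)
      else if i.val = 1 then (y, 0)
      else if i.val ≤ m then (0, x ^ (i.val - 1))
      else (0, y ^ (i.val - m))
    LinearIndependent K (fun i => π (g i)) ∧
    Submodule.span K (Set.range fun i => π (g i)) =
      Submodule.map π (M.restrictScalars K) ∧
    Module.finrank K (Submodule.map π (M.restrictScalars K)) = m + n := by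
  intro R x y f₁ f₂ N M π g
  have hmn2 : 2 ≤ m + n := by omega
  have hg : g = fun i : Fin (m + n) =>
      if i.val = 0 then ((X 0 : R), (0 : R))
      else if i.val = 1 then (X 1, 0)
      else if i.val ≤ m then (0, X 0 ^ (i.val - 1))
      else (0, X 1 ^ (i.val - m)) := rfl
  have hN : N = Submodule.span R
      {((X 0 * X 1 : R), (0:R)), ((0:R), X 0 * X 1), ((X 0 ^ m + X 1 ^ n : R), (0:R)),
        ((0:R), X 0 ^ m + X 1 ^ n),
        ((X 0 * X 1 : R), (m : R) * X 0 ^ m), ((X 1 ^ 2 : R), (m : R) * X 0 ^ (m - 1) * X 1),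
        ((X 0 ^ 2 : R), (n : R) * X 0 * X 1 ^ (n - 1)), ((X 0 * X 1 : R), (n : R) * X 1 ^ n)} := rfl
  have hM : M = Submodule.span R
      {((X 0 : R), (0:R)), ((X 1 : R), (0:R)), ((0:R), (X 0 : R)), ((0:R), (X 1 : R))} := rfl
  have hπ : π = ((N.restrictScalars K).mkQ) := rfl
  have hmK : (m : K) ≠ 0 := fun h => hpm ((CharP.cast_eq_zero_iff K p m).mp h)
  -- generators of N
  have hgen1 : ((X 0 * X 1 : R), (0:R)) ∈ N := by
    rw [hN]; exact Submodule.subset_span (Set.mem_insert _ _)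
  have hgen2 : ((0:R), (X 0 * X 1 : R)) ∈ N := by
    rw [hN]; exact Submodule.subset_span (Set.mem_insert_of_mem _ (Set.mem_insert _ _))
  have hgen4 : ((0:R), (X 0 ^ m + X 1 ^ n : R)) ∈ N := by
    rw [hN]; exact Submodule.subset_span (Set.mem_insert_of_mem _ (Set.mem_insert_of_mem _ (Set.mem_insert_of_mem _ (Set.mem_insert _ _))))
  have hgen5 : ((X 0 * X 1 : R), ((m : R) * X 0 ^ m : R)) ∈ N := by
    rw [hN]; exact Submodule.subset_span (Set.mem_insert_of_mem _ (Set.mem_insert_of_mem _ (Set.mem_insert_of_mem _ (Set.mem_insert_of_mem _ (Set.mem_insert _ _)))))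
  have hgen6 : ((X 1 ^ 2 : R), ((m : R) * X 0 ^ (m - 1) * X 1 : R)) ∈ N := by
    rw [hN]; exact Submodule.subset_span (Set.mem_insert_of_mem _ (Set.mem_insert_of_mem _ (Set.mem_insert_of_mem _ (Set.mem_insert_of_mem _ (Set.mem_insert_of_mem _ (Set.mem_insert _ _))))))
  have hgen7 : ((X 0 ^ 2 : R), ((n : R) * X 0 * X 1 ^ (n - 1) : R)) ∈ N := by
    rw [hN]; exact Submodule.subset_span (Set.mem_insert_of_mem _ (Set.mem_insert_of_mem _ (Set.mem_insert_of_mem _ (Set.mem_insert_of_mem _ (Set.mem_insert_of_mem _ (Set.mem_insert_of_mem _ (Set.mem_insert _ _)))))))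
  have hgen8 : ((X 0 * X 1 : R), ((n : R) * X 1 ^ n : R)) ∈ N := by
    rw [hN]; exact Submodule.subset_span (Set.mem_insert_of_mem _ (Set.mem_insert_of_mem _ (Set.mem_insert_of_mem _ (Set.mem_insert_of_mem _ (Set.mem_insert_of_mem _ (Set.mem_insert_of_mem _ (Set.mem_insert_of_mem _ (Set.mem_singleton _))))))))
  -- derived membership facts
  have hNx2 : ((X 0 ^ 2 : R), (0:R)) ∈ N := by
    have h := Submodule.sub_mem N hgen7 (Submodule.smul_mem N ((n:R) * X 1 ^ (n-2)) hgen2)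
    have e : ((X 0 ^ 2 : R), ((n : R) * X 0 * X 1 ^ (n - 1) : R))
        - ((n:R) * X 1 ^ (n-2)) • ((0:R), (X 0 * X 1 : R)) = ((X 0 ^ 2 : R), (0:R)) := by
      have hyy : (X 1 : R) ^ (n-1) = X 1 ^ (n-2) * X 1 := by
        rw [← pow_succ]; congr 1; omega
      refine Prod.ext_iff.mpr ⟨by simp, ?_⟩
      show (n : R) * X 0 * X 1 ^ (n - 1) - ((n:R) * X 1 ^ (n-2)) * (X 0 * X 1) = 0
      rw [hyy]; ring
    rwa [e] at h
  have hNy2 : ((X 1 ^ 2 : R), (0:R)) ∈ N := by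
    have h := Submodule.sub_mem N hgen6 (Submodule.smul_mem N ((m:R) * X 0 ^ (m-2)) hgen2)
    have e : ((X 1 ^ 2 : R), ((m : R) * X 0 ^ (m - 1) * X 1 : R))
        - ((m:R) * X 0 ^ (m-2)) • ((0:R), (X 0 * X 1 : R)) = ((X 1 ^ 2 : R), (0:R)) := by
      have hxx : (X 0 : R) ^ (m-1) = X 0 ^ (m-2) * X 0 := by
        rw [← pow_succ]; congr 1; omega
      refine Prod.ext_iff.mpr ⟨by simp, ?_⟩
      show (m : R) * X 0 ^ (m - 1) * X 1 - ((m:R) * X 0 ^ (m-2)) * (X 0 * X 1) = 0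
      rw [hxx]; ring
    rwa [e] at h
  have hN0xm : ((0:R), (X 0 ^ m : R)) ∈ N := by
    have h := Submodule.smul_mem N (C (m:K)⁻¹ : R) (Submodule.sub_mem N hgen5 hgen1)
    have e : (C (m:K)⁻¹ : R) • (((X 0 * X 1 : R), ((m : R) * X 0 ^ m : R))
        - ((X 0 * X 1 : R), (0:R))) = ((0:R), (X 0 ^ m : R)) := by
      refine Prod.ext_iff.mpr ⟨by simp, ?_⟩
      show C (m:K)⁻¹ * ((m : R) * X 0 ^ m - 0) = X 0 ^ m
      rw [sub_zero, show ((m:R)) = C (m:K) from (map_natCast _ m).symm,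
        ← mul_assoc, ← map_mul, inv_mul_cancel₀ hmK, map_one, one_mul]
    rwa [e] at h
  have hN0yn : ((0:R), (X 1 ^ n : R)) ∈ N := by
    have h := Submodule.sub_mem N hgen4 hN0xm
    have e : ((0:R), (X 0 ^ m + X 1 ^ n : R)) - ((0:R), (X 0 ^ m : R))
        = ((0:R), (X 1 ^ n : R)) := by
      refine Prod.ext_iff.mpr ⟨by simp, ?_⟩
      show (X 0 ^ m + X 1 ^ n : R) - X 0 ^ m = X 1 ^ n
      ring
    rwa [e] at h
  -- the bounding ideals
  have hP1 : ∀ e d : Fin 2 →₀ ℕ, e ≤ d → (fun d : Fin 2 →₀ ℕ => d 0 + d 1 ≤ 1) d →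
      (fun d : Fin 2 →₀ ℕ => d 0 + d 1 ≤ 1) e := by
    intro e d hed hd
    beta_reduce at hd ⊢
    rw [Finsupp.le_def] at hed
    have h0 := hed 0
    have h1 := hed 1
    omega
  have hP2 : ∀ e d : Fin 2 →₀ ℕ, e ≤ d →
      (fun d : Fin 2 →₀ ℕ => (d 1 = 0 ∧ d 0 < m) ∨ (d 0 = 0 ∧ d 1 < n)) d →
      (fun d : Fin 2 →₀ ℕ => (d 1 = 0 ∧ d 0 < m) ∨ (d 0 = 0 ∧ d 1 < n)) e := by
    intro e d hed hd
    beta_reduce at hd ⊢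
    rw [Finsupp.le_def] at hed
    have h0 := hed 0
    have h1 := hed 1
    omega
  set J1 : Ideal R := idealOf (fun d : Fin 2 →₀ ℕ => d 0 + d 1 ≤ 1) hP1 with hJ1
  set J2 : Ideal R := idealOf
    (fun d : Fin 2 →₀ ℕ => (d 1 = 0 ∧ d 0 < m) ∨ (d 0 = 0 ∧ d 1 < n)) hP2 with hJ2
  -- membership facts for the generators
  have hJ1xy : (X 0 * X 1 : R) ∈ J1 := by
    have h := pow_mul_pow_mem_idealOf (K := K) (hP := hP1) 1 1 (by
      rw [fs_apply0, fs_apply1]; omega)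
    rwa [pow_one, pow_one] at h
  have hJ1x2 : (X 0 ^ 2 : R) ∈ J1 := pow_mem_idealOf 0 2 (by
    simp [Finsupp.single_apply])
  have hJ1y2 : (X 1 ^ 2 : R) ∈ J1 := pow_mem_idealOf 1 2 (by
    simp [Finsupp.single_apply])
  have hJ1xm : (X 0 ^ m : R) ∈ J1 := pow_mem_idealOf 0 m (by
    simp [Finsupp.single_apply]; omega)
  have hJ1yn : (X 1 ^ n : R) ∈ J1 := pow_mem_idealOf 1 n (by
    simp [Finsupp.single_apply]; omega)
  have hJ2xy : (X 0 * X 1 : R) ∈ J2 := by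
    have h := pow_mul_pow_mem_idealOf (K := K) (hP := hP2) 1 1 (by
      rw [not_or, fs_apply0, fs_apply1]
      constructor <;> rintro ⟨h1, h2⟩ <;> omega)
    rwa [pow_one, pow_one] at h
  have hJ2xm : (X 0 ^ m : R) ∈ J2 := pow_mem_idealOf 0 m (by
    simp [Finsupp.single_apply]; omega)
  have hJ2yn : (X 1 ^ n : R) ∈ J2 := pow_mem_idealOf 1 n (by
    simp [Finsupp.single_apply]; omega)
  have hJ2g6 : ((m : R) * X 0 ^ (m - 1) * X 1 : R) ∈ J2 := by
    have e : ((m : R) * X 0 ^ (m - 1) * X 1 : R) = (m : R) * (X 0 ^ (m-1) * X 1 ^ 1) := by ring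
    rw [e]
    refine Ideal.mul_mem_left _ _ (pow_mul_pow_mem_idealOf (m-1) 1 ?_)
    rw [not_or, fs_apply0, fs_apply1]
    constructor <;> rintro ⟨h1, h2⟩ <;> omega
  have hJ2g7 : ((n : R) * X 0 * X 1 ^ (n - 1) : R) ∈ J2 := by
    have e : ((n : R) * X 0 * X 1 ^ (n - 1) : R) = (n : R) * (X 0 ^ 1 * X 1 ^ (n-1)) := by ring
    rw [e]
    refine Ideal.mul_mem_left _ _ (pow_mul_pow_mem_idealOf 1 (n-1) ?_)
    rw [not_or, fs_apply0, fs_apply1]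
    constructor <;> rintro ⟨h1, h2⟩ <;> omega
  have hle : N ≤ Submodule.prod J1 J2 := by
    rw [hN, Submodule.span_le]
    rintro z hz
    simp only [Set.mem_insert_iff, Set.mem_singleton_iff] at hz
    rcases hz with rfl | rfl | rfl | rfl | rfl | rfl | rfl | rfl <;>
      refine Submodule.mem_prod.mpr ⟨?_, ?_⟩
    · exact hJ1xy
    · exact Submodule.zero_mem _
    · exact Submodule.zero_mem _
    · exact hJ2xy
    · exact Ideal.add_mem _ hJ1xm hJ1yn
    · exact Submodule.zero_mem _
    · exact Submodule.zero_mem _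
    · exact Ideal.add_mem _ hJ2xm hJ2yn
    · exact hJ1xy
    · exact Ideal.mul_mem_left _ _ hJ2xm
    · exact hJ1y2
    · exact hJ2g6
    · exact hJ1x2
    · exact hJ2g7
    · exact hJ1xy
    · exact Ideal.mul_mem_left _ _ hJ2yn
  -- values of g
  have hgval0 : ∀ j : Fin (m + n), j.val = 0 → g j = ((X 0 : R), (0:R)) := by
    intro j hj
    rw [hg]
    simp only [hj]
    rfl
  have hgval1 : ∀ j : Fin (m + n), j.val = 1 → g j = ((X 1 : R), (0:R)) := by
    intro j hj
    rw [hg]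
    simp only [hj]
    rfl
  have hgval2 : ∀ j : Fin (m + n), 2 ≤ j.val → j.val ≤ m →
      g j = ((0:R), (X 0 : R) ^ (j.val - 1)) := by
    intro j h2 hjm
    rw [hg]
    simp only []
    rw [if_neg (by omega), if_neg (by omega), if_pos hjm]
  have hgval3 : ∀ j : Fin (m + n), m < j.val → g j = ((0:R), (X 1 : R) ^ (j.val - m)) := by
    intro j hjm
    rw [hg]
    simp only []
    rw [if_neg (by omega), if_neg (by omega), if_neg (by omega)]
  -- coefficients of g-components
  have hc1 : ∀ j : Fin (m + n),
      coeff (single (0:Fin 2) 1) (g j).1 = if j.val = 0 then (1:K) else 0 := by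
    intro j
    by_cases h0 : j.val = 0
    · rw [hgval0 j h0, if_pos h0]
      have h := coeff_single_pow (K := K) 0 1 1
      rw [if_pos rfl, pow_one] at h
      exact h
    rw [if_neg h0]
    by_cases h1 : j.val = 1
    · rw [hgval1 j h1]
      have h := coeff_single_pow' (K := K) 0 1 (by decide) 1 1 one_ne_zero
      rw [pow_one] at h
      exact h
    by_cases h2 : j.val ≤ m
    · rw [hgval2 j (by omega) h2]
      exact map_zero _
    · rw [hgval3 j (by omega)]
      exact map_zero _
  have hc2 : ∀ j : Fin (m + n),
      coeff (single (1:Fin 2) 1) (g j).1 = if j.val = 1 then (1:K) else 0 := by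
    intro j
    by_cases h0 : j.val = 0
    · rw [hgval0 j h0, if_neg (by omega)]
      have h := coeff_single_pow' (K := K) 1 0 (by decide) 1 1 one_ne_zero
      rw [pow_one] at h
      exact h
    by_cases h1 : j.val = 1
    · rw [hgval1 j h1, if_pos h1]
      have h := coeff_single_pow (K := K) 1 1 1
      rw [if_pos rfl, pow_one] at h
      exact h
    rw [if_neg h1]
    by_cases h2 : j.val ≤ m
    · rw [hgval2 j (by omega) h2]
      exact map_zero _
    · rw [hgval3 j (by omega)]
      exact map_zero _
  have hc3 : ∀ r : ℕ, 1 ≤ r → r < m → ∀ j : Fin (m + n),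
      coeff (single (0:Fin 2) r) (g j).2 = if j.val = r + 1 then (1:K) else 0 := by
    intro r hr1 hrm j
    by_cases h0 : j.val = 0
    · rw [hgval0 j h0, if_neg (by omega)]
      exact map_zero _
    by_cases h1 : j.val = 1
    · rw [hgval1 j h1, if_neg (by omega)]
      exact map_zero _
    by_cases h2 : j.val ≤ m
    · rw [hgval2 j (by omega) h2]
      show coeff (single (0:Fin 2) r) ((X 0 : R) ^ (j.val - 1)) = _
      rw [coeff_single_pow]
      by_cases hh : j.val = r + 1
      · rw [if_pos (by omega), if_pos hh]
      · rw [if_neg (by omega), if_neg hh]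
    · rw [hgval3 j (by omega)]
      show coeff (single (0:Fin 2) r) ((X 1 : R) ^ (j.val - m)) = _
      rw [coeff_single_pow' 0 1 (by decide) r (j.val - m) (by omega), if_neg (by omega)]
  have hc4 : ∀ r : ℕ, 1 ≤ r → r < n → ∀ j : Fin (m + n),
      coeff (single (1:Fin 2) r) (g j).2 = if j.val = m + r then (1:K) else 0 := by
    intro r hr1 hrn j
    by_cases h0 : j.val = 0
    · rw [hgval0 j h0, if_neg (by omega)]
      exact map_zero _
    by_cases h1 : j.val = 1
    · rw [hgval1 j h1, if_neg (by omega)]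
      exact map_zero _
    by_cases h2 : j.val ≤ m
    · rw [hgval2 j (by omega) h2]
      show coeff (single (1:Fin 2) r) ((X 0 : R) ^ (j.val - 1)) = _
      rw [coeff_single_pow' 1 0 (by decide) r (j.val - 1) (by omega), if_neg (by omega)]
    · rw [hgval3 j (by omega)]
      show coeff (single (1:Fin 2) r) ((X 1 : R) ^ (j.val - m)) = _
      rw [coeff_single_pow]
      by_cases hh : j.val = m + r
      · rw [if_pos (by omega), if_pos hh]
      · rw [if_neg (by omega), if_neg hh]
  -- linear independence
  have hLI : LinearIndependent K (fun i => π (g i)) := by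
    rw [Fintype.linearIndependent_iff]
    intro c hc
    have hzN : (∑ i : Fin (m + n), c i • g i) ∈ N := by
      have h0 : π (∑ i : Fin (m + n), c i • g i) = 0 := by
        rw [map_sum]
        simp only [map_smul]
        exact hc
      rw [hπ, Submodule.mkQ_apply, Submodule.Quotient.mk_eq_zero] at h0
      exact h0
    obtain ⟨hz1, hz2⟩ := Submodule.mem_prod.mp (hle hzN)
    have key1 : ∀ d : Fin 2 →₀ ℕ, coeff d (∑ i : Fin (m + n), c i • g i).1
        = ∑ i : Fin (m + n), c i * coeff d (g i).1 := by
      intro d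
      rw [Prod.fst_sum, map_sum]
      exact Finset.sum_congr rfl fun i _ => by rw [Prod.smul_fst, map_smul, smul_eq_mul]
    have key2 : ∀ d : Fin 2 →₀ ℕ, coeff d (∑ i : Fin (m + n), c i • g i).2
        = ∑ i : Fin (m + n), c i * coeff d (g i).2 := by
      intro d
      rw [Prod.snd_sum, map_sum]
      exact Finset.sum_congr rfl fun i _ => by rw [Prod.smul_snd, map_smul, smul_eq_mul]
    have hsum : ∀ (v : ℕ) (hv : v < m + n),
        (∑ i : Fin (m + n), c i * (if i.val = v then (1:K) else 0)) = c ⟨v, hv⟩ := by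
      intro v hv
      rw [Finset.sum_eq_single (⟨v, hv⟩ : Fin (m + n))]
      · rw [if_pos rfl, mul_one]
      · intro j _ hj
        rw [if_neg (fun hc' => hj (Fin.ext hc')), mul_zero]
      · intro h
        exact absurd (Finset.mem_univ _) h
    intro i
    by_cases h0 : i.val = 0
    · have h := hz1 (single (0:Fin 2) 1) (by simp [Finsupp.single_apply])
      rw [key1, Finset.sum_congr rfl (fun j _ => by rw [hc1 j]), hsum 0 (by omega)] at h
      have e : i = ⟨0, by omega⟩ := Fin.ext h0
      rw [e]
      exact h
    by_cases h1 : i.val = 1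
    · have h := hz1 (single (1:Fin 2) 1) (by simp [Finsupp.single_apply])
      rw [key1, Finset.sum_congr rfl (fun j _ => by rw [hc2 j]), hsum 1 (by omega)] at h
      have e : i = ⟨1, by omega⟩ := Fin.ext h1
      rw [e]
      exact h
    by_cases h2 : i.val ≤ m
    · have h := hz2 (single (0:Fin 2) (i.val - 1))
        (Or.inl ⟨by simp [Finsupp.single_apply], by simp [Finsupp.single_apply]; omega⟩)
      rw [key2, Finset.sum_congr rfl (fun j _ => by
        rw [hc3 (i.val - 1) (by omega) (by omega) j]), hsum (i.val - 1 + 1) (by omega)] at h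
      have e : i = ⟨i.val - 1 + 1, by omega⟩ := Fin.ext (show i.val = i.val - 1 + 1 by omega)
      rw [e]
      exact h
    · have h := hz2 (single (1:Fin 2) (i.val - m))
        (Or.inr ⟨by simp [Finsupp.single_apply], by simp [Finsupp.single_apply]; omega⟩)
      rw [key2, Finset.sum_congr rfl (fun j _ => by
        rw [hc4 (i.val - m) (by omega) (by omega) j]), hsum (m + (i.val - m)) (by omega)] at h
      have e : i = ⟨m + (i.val - m), by omega⟩ := Fin.ext (show i.val = m + (i.val - m) by omega)
      rw [e]
      exact h
  -- spanning
  have hπg : ∀ i : Fin (m + n), π (g i) ∈ Submodule.span K (Set.range fun i => π (g i)) :=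
    fun i => Submodule.subset_span ⟨i, rfl⟩
  have hπ0 : ∀ s ∈ N, π s = 0 := by
    intro s hs
    rw [hπ, Submodule.mkQ_apply, Submodule.Quotient.mk_eq_zero]
    exact hs
  have hgM : ∀ i : Fin (m + n), g i ∈ M := by
    intro i
    by_cases h0 : i.val = 0
    · rw [hgval0 i h0, hM]
      exact Submodule.subset_span (Set.mem_insert _ _)
    by_cases h1 : i.val = 1
    · rw [hgval1 i h1, hM]
      exact Submodule.subset_span (Set.mem_insert_of_mem _ (Set.mem_insert _ _))
    by_cases h2 : i.val ≤ m
    · rw [hgval2 i (by omega) h2]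
      have e : ((0:R), (X 0 : R) ^ (i.val - 1))
          = ((X 0 : R) ^ (i.val - 2)) • ((0:R), (X 0 : R)) := by
        refine Prod.ext_iff.mpr ⟨by simp, ?_⟩
        show (X 0 : R) ^ (i.val - 1) = X 0 ^ (i.val - 2) * X 0
        rw [← pow_succ]; congr 1; omega
      rw [e, hM]
      exact Submodule.smul_mem _ _ (Submodule.subset_span
        (Set.mem_insert_of_mem _ (Set.mem_insert_of_mem _ (Set.mem_insert _ _))))
    · rw [hgval3 i (by omega)]
      have e : ((0:R), (X 1 : R) ^ (i.val - m))
          = ((X 1 : R) ^ (i.val - m - 1)) • ((0:R), (X 1 : R)) := by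
        refine Prod.ext_iff.mpr ⟨by simp, ?_⟩
        show (X 1 : R) ^ (i.val - m) = X 1 ^ (i.val - m - 1) * X 1
        rw [← pow_succ]; congr 1; omega
      rw [e, hM]
      exact Submodule.smul_mem _ _ (Submodule.subset_span
        (Set.mem_insert_of_mem _ (Set.mem_insert_of_mem _ (Set.mem_insert_of_mem _
          (Set.mem_singleton _)))))
  have hspan : Submodule.span K (Set.range fun i => π (g i))
      = Submodule.map π (M.restrictScalars K) := by
    apply le_antisymm
    · rw [Submodule.span_le]
      rintro _ ⟨i, rfl⟩
      exact Submodule.mem_map_of_mem (hgM i)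
    · rw [Submodule.map_le_iff_le_comap]
      intro z hz
      rw [Submodule.restrictScalars_mem, hM, Submodule.mem_span_insert] at hz
      obtain ⟨a, z₁, hz₁, rfl⟩ := hz
      rw [Submodule.mem_span_insert] at hz₁
      obtain ⟨b, z₂, hz₂, rfl⟩ := hz₁
      rw [Submodule.mem_span_insert] at hz₂
      obtain ⟨cc, z₃, hz₃, rfl⟩ := hz₂
      rw [Submodule.mem_span_singleton] at hz₃
      obtain ⟨dd, rfl⟩ := hz₃
      rw [Submodule.mem_comap]
      have hzz : a • ((X 0 : R), (0:R)) + (b • ((X 1 : R), (0:R))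
            + (cc • ((0:R), (X 0:R)) + dd • ((0:R), (X 1:R))))
          = ((a * X 0 + b * X 1 : R), (0:R)) + ((0:R), (cc * X 0 + dd * X 1 : R)) := by
        refine Prod.ext_iff.mpr ⟨?_, ?_⟩
        · show a * X 0 + (b * X 1 + (cc * 0 + dd * 0)) = (a * X 0 + b * X 1) + 0
          ring
        · show a * 0 + (b * 0 + (cc * X 0 + dd * X 1)) = 0 + (cc * X 0 + dd * X 1)
          ring
      rw [hzz, map_add]
      refine Submodule.add_mem _ ?_ ?_
      · obtain ⟨u₁, v₁, h₁⟩ := decompA (K := K) a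
        obtain ⟨u₂, v₂, h₂⟩ := decompA' (K := K) b
        have hsN : ((u₁ * X 0 ^ 2 + (v₁ + u₂) * (X 0 * X 1) + v₂ * X 1 ^ 2 : R), (0:R)) ∈ N := by
          have e : ((u₁ * X 0 ^ 2 + (v₁ + u₂) * (X 0 * X 1) + v₂ * X 1 ^ 2 : R), (0:R))
              = u₁ • ((X 0 ^ 2 : R), (0:R)) + (v₁ + u₂) • ((X 0 * X 1 : R), (0:R))
                + v₂ • ((X 1 ^ 2 : R), (0:R)) := by
            refine Prod.ext_iff.mpr ⟨?_, ?_⟩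
            · show (u₁ * X 0 ^ 2 + (v₁ + u₂) * (X 0 * X 1) + v₂ * X 1 ^ 2 : R)
                = u₁ * X 0 ^ 2 + (v₁ + u₂) * (X 0 * X 1) + v₂ * X 1 ^ 2
              rfl
            · show (0:R) = u₁ * 0 + (v₁ + u₂) * 0 + v₂ * 0
              ring
          rw [e]
          exact Submodule.add_mem _ (Submodule.add_mem _ (Submodule.smul_mem _ _ hNx2)
            (Submodule.smul_mem _ _ hgen1)) (Submodule.smul_mem _ _ hNy2)
        have hrep : ((a * X 0 + b * X 1 : R), (0:R))
            = (coeff 0 a) • ((X 0 : R), (0:R)) + (coeff 0 b) • ((X 1 : R), (0:R))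
              + ((u₁ * X 0 ^ 2 + (v₁ + u₂) * (X 0 * X 1) + v₂ * X 1 ^ 2 : R), (0:R)) := by
          refine Prod.ext_iff.mpr ⟨?_, by simp⟩
          show (a * X 0 + b * X 1 : R) = (coeff 0 a) • (X 0:R) + (coeff 0 b) • (X 1:R)
            + (u₁ * X 0 ^ 2 + (v₁ + u₂) * (X 0 * X 1) + v₂ * X 1 ^ 2)
          rw [smul_eq_C_mul, smul_eq_C_mul]
          linear_combination h₁ + h₂
        rw [hrep, map_add, map_add, map_smul, map_smul, hπ0 _ hsN, add_zero]
        refine Submodule.add_mem _ (Submodule.smul_mem _ _ ?_) (Submodule.smul_mem _ _ ?_)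
        · rw [← hgval0 ⟨0, by omega⟩ rfl]
          exact hπg _
        · rw [← hgval1 ⟨1, by omega⟩ rfl]
          exact hπg _
      · have hzero : coeff 0 (cc * X 0 + dd * X 1 : R) = 0 := by
          rw [map_add, coeff_zero_mul_X, coeff_zero_mul_X, add_zero]
        obtain ⟨u, v, w, hB⟩ := decompB m n hm hn (cc * X 0 + dd * X 1) hzero
        have hsN : ((0:R), (u * (X 0 * X 1) + v * X 0 ^ m + w * X 1 ^ n : R)) ∈ N := by
          have e : ((0:R), (u * (X 0 * X 1) + v * X 0 ^ m + w * X 1 ^ n : R))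
              = u • ((0:R), (X 0 * X 1 : R)) + v • ((0:R), (X 0 ^ m : R))
                + w • ((0:R), (X 1 ^ n : R)) := by
            refine Prod.ext_iff.mpr ⟨?_, ?_⟩
            · show (0:R) = u * 0 + v * 0 + w * 0
              ring
            · show (u * (X 0 * X 1) + v * X 0 ^ m + w * X 1 ^ n : R)
                = u * (X 0 * X 1) + v * X 0 ^ m + w * X 1 ^ n
              rfl
          rw [e]
          exact Submodule.add_mem _ (Submodule.add_mem _ (Submodule.smul_mem _ _ hgen2)
            (Submodule.smul_mem _ _ hN0xm)) (Submodule.smul_mem _ _ hN0yn)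
        have hrep : ((0:R), (cc * X 0 + dd * X 1 : R))
            = (∑ j ∈ Finset.Ico 1 m,
                (coeff (single 0 j) (cc * X 0 + dd * X 1 : R)) • ((0:R), (X 0:R) ^ j))
              + (∑ k ∈ Finset.Ico 1 n,
                (coeff (single 1 k) (cc * X 0 + dd * X 1 : R)) • ((0:R), (X 1:R) ^ k))
              + ((0:R), (u * (X 0 * X 1) + v * X 0 ^ m + w * X 1 ^ n : R)) := by
          rw [sum_smul_pair, sum_smul_pair]
          refine Prod.ext_iff.mpr ⟨?_, ?_⟩
          · show (0:R) = 0 + 0 + 0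
            ring
          · show (cc * X 0 + dd * X 1 : R)
              = (∑ j ∈ Finset.Ico 1 m,
                  (coeff (single 0 j) (cc * X 0 + dd * X 1 : R)) • ((X 0:R) ^ j))
                + (∑ k ∈ Finset.Ico 1 n,
                  (coeff (single 1 k) (cc * X 0 + dd * X 1 : R)) • ((X 1:R) ^ k))
                + (u * (X 0 * X 1) + v * X 0 ^ m + w * X 1 ^ n)
            simp only [smul_eq_C_mul]
            linear_combination hB
        rw [hrep, map_add, map_add, map_sum, map_sum]
        refine Submodule.add_mem _ (Submodule.add_mem _ (Submodule.sum_mem _ ?_)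
          (Submodule.sum_mem _ ?_)) ?_
        · intro j hj
          simp only [Finset.mem_Ico] at hj
          rw [map_smul]
          refine Submodule.smul_mem _ _ ?_
          have e : g (⟨j + 1, by omega⟩ : Fin (m + n)) = ((0:R), (X 0:R) ^ j) := by
            rw [hgval2 ⟨j + 1, by omega⟩ (show 2 ≤ j + 1 by omega) (show j + 1 ≤ m by omega)]
            simp
          rw [← e]
          exact hπg _
        · intro k hk
          simp only [Finset.mem_Ico] at hk
          rw [map_smul]
          refine Submodule.smul_mem _ _ ?_
          have e : g (⟨m + k, by omega⟩ : Fin (m + n)) = ((0:R), (X 1:R) ^ k) := by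
            rw [hgval3 ⟨m + k, by omega⟩ (show m < m + k by omega)]
            simp
          rw [← e]
          exact hπg _
        · rw [hπ0 _ hsN]
          exact Submodule.zero_mem _
  refine ⟨hLI, hspan, ?_⟩
  rw [← hspan, finrank_span_eq_card hLI, Fintype.card_fin]


end
end
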